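/- arXiv:2403.07502 — 4 statements merged into one kernel-verified Lean document; each statement's English description precedes it below -/
import Mathlib

section
/- Let V satisfy the Assumption, and for (t,x,ξ) let (x^{(2)}(s;t,x,ξ), ξ^{(2)}(s;t,x,ξ)) be the unique global solution of the Hamiltonian system with x^{(2)}(t) = x, ξ^{(2)}(t) = ξ. Suppose (as holds by smooth dependence on initial data) that there are T₁ > 0 and C > 0 such that |∂_{ξ_j} x^{(2)}_k(0;t,x,ξ) + δ_{jk} t| ≤ C t² for all 0 < t < T₁, x, ξ ∈ ℝⁿ and 1 ≤ j,k ≤ n. Then there exist T > 0 and a bounded function r₀ on (0,T) × ℝⁿ × ℝⁿ such that for every 0 < t < T and x ∈ ℝⁿ, the map ξ ↦ X = x^{(2)}(0;t,x,ξ) is invertible and the absolute value of the Jacobian determinant of its inverse satisfies |∂(ξ)/∂(x^{(2)}(0;t,x,ξ))| = t^{−n} + t^{−n+1} r₀(t,x,X). -/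
open MeasureTheory
open scoped Real

open scoped BigOperators Nat NNReal

section aux
variable {n : ℕ}
variable {n : ℕ}

lemma aux_abs_coord_le (v : EuclideanSpace ℝ (Fin n)) (j : Fin n) : |v j| ≤ ‖v‖ := by
  rw [EuclideanSpace.norm_eq]
  rw [show |v j| = Real.sqrt (‖v j‖ ^ 2) by
    rw [Real.sqrt_sq_eq_abs, Real.norm_eq_abs, abs_abs]]
  apply Real.sqrt_le_sqrt
  exact Finset.single_le_sum (f := fun i => ‖v i‖ ^ 2)
    (fun i _ => by positivity) (Finset.mem_univ j)

lemma aux_eucl_decomp (v : EuclideanSpace ℝ (Fin n)) :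
    ∑ k, v k • EuclideanSpace.single k (1 : ℝ) = v := by
  classical
  have h := (EuclideanSpace.basisFun (Fin n) ℝ).toBasis.sum_repr v
  simpa [EuclideanSpace.basisFun_apply, OrthonormalBasis.coe_toBasis,
    OrthonormalBasis.coe_toBasis_repr_apply, EuclideanSpace.basisFun_repr] using h

lemma aux_norm_le_sum (v : EuclideanSpace ℝ (Fin n)) : ‖v‖ ≤ ∑ k, |v k| := by
  calc ‖v‖ = ‖∑ k, v k • EuclideanSpace.single k (1 : ℝ)‖ := by rw [aux_eucl_decomp]
    _ ≤ ∑ k, ‖v k • EuclideanSpace.single k (1 : ℝ)‖ := norm_sum_le _ _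
    _ = ∑ k, |v k| := by
        refine Finset.sum_congr rfl fun k _ => ?_
        rw [norm_smul, EuclideanSpace.norm_single, Real.norm_eq_abs, norm_one, mul_one]

lemma aux_opnorm_le (L : EuclideanSpace ℝ (Fin n) →L[ℝ] EuclideanSpace ℝ (Fin n))
    (c : ℝ) (hc : 0 ≤ c)
    (h : ∀ j k, |L (EuclideanSpace.single j 1) k| ≤ c) : ‖L‖ ≤ (n : ℝ) ^ 2 * c := by
  refine ContinuousLinearMap.opNorm_le_bound _ (by positivity) fun v => ?_
  have hv : L v = ∑ j, v j • L (EuclideanSpace.single j 1) := by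
    conv_lhs => rw [← aux_eucl_decomp v]
    rw [map_sum]
    simp
  calc ‖L v‖ = ‖∑ j, v j • L (EuclideanSpace.single j 1)‖ := by rw [hv]
    _ ≤ ∑ j, ‖v j • L (EuclideanSpace.single j 1)‖ := norm_sum_le _ _
    _ ≤ ∑ j : Fin n, ‖v‖ * (n * c) := by
        refine Finset.sum_le_sum fun j _ => ?_
        rw [norm_smul, Real.norm_eq_abs]
        have h1 : ‖L (EuclideanSpace.single j 1)‖ ≤ n * c := by
          refine le_trans (aux_norm_le_sum _) ?_
          calc ∑ k, |L (EuclideanSpace.single j 1) k| ≤ ∑ _k : Fin n, c :=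
                Finset.sum_le_sum fun k _ => h j k
            _ = n * c := by simp [mul_comm]
        exact mul_le_mul (aux_abs_coord_le v j) h1 (norm_nonneg _) (norm_nonneg _)
    _ = (n : ℝ) ^ 2 * c * ‖v‖ := by simp [Finset.sum_const]; ring

lemma aux_det_bound (m : Fin n → Fin n → ℝ) :
    ‖(Matrix.detRowAlternating :
        AlternatingMap ℝ (Fin n → ℝ) ℝ (Fin n)).toMultilinearMap m‖ ≤
      (n ! : ℝ) * ∏ i, ‖m i‖ := by
  classical
  have : (Matrix.detRowAlternating :
      AlternatingMap ℝ (Fin n → ℝ) ℝ (Fin n)).toMultilinearMap m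
      = Matrix.det (Matrix.of m) := rfl
  rw [this, Matrix.det_apply']
  calc ‖∑ σ : Equiv.Perm (Fin n), Equiv.Perm.sign σ * ∏ i, Matrix.of m (σ i) i‖
      ≤ ∑ σ : Equiv.Perm (Fin n), ‖(Equiv.Perm.sign σ : ℝ) * ∏ i, Matrix.of m (σ i) i‖ :=
        norm_sum_le _ _
    _ ≤ ∑ _σ : Equiv.Perm (Fin n), ∏ i, ‖m i‖ := by
        refine Finset.sum_le_sum fun σ _ => ?_
        rw [norm_mul]
        have hsign : ‖((Equiv.Perm.sign σ : ℤ) : ℝ)‖ = 1 := by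
          rcases Int.units_eq_one_or (Equiv.Perm.sign σ) with h | h <;> simp [h]
        rw [hsign, one_mul]
        calc ‖∏ i, Matrix.of m (σ i) i‖ ≤ ∏ i, ‖m (σ i)‖ := by
              rw [norm_prod]
              exact Finset.prod_le_prod (fun i _ => norm_nonneg _)
                (fun i _ => norm_le_pi_norm (m (σ i)) i)
          _ = ∏ i, ‖m i‖ := Equiv.prod_comp σ fun i => ‖m i‖
    _ = (n ! : ℝ) * ∏ i, ‖m i‖ := by
        rw [Finset.sum_const, Finset.card_univ, Fintype.card_perm, Fintype.card_fin,
          nsmul_eq_mul]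

lemma aux_det_sub_one (Cc t : ℝ) (hC : 0 ≤ Cc) (ht : 0 ≤ t) (ht1 : t ≤ 1)
    (P : Fin n → Fin n → ℝ)
    (h : ∀ k j, |P k j - (if k = j then 1 else 0)| ≤ Cc * t) :
    |Matrix.det (Matrix.of P) - 1| ≤ ((n ! : ℝ) * n * (1 + Cc) ^ (n - 1) * Cc) * t := by
  classical
  set f := (Matrix.detRowAlternating :
    AlternatingMap ℝ (Fin n → ℝ) ℝ (Fin n)).toMultilinearMap
  set I : Fin n → Fin n → ℝ := fun k j => if k = j then 1 else 0 with hI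
  have hfP : f P = Matrix.det (Matrix.of P) := rfl
  have hfI : f I = 1 := by
    have : Matrix.of I = (1 : Matrix (Fin n) (Fin n) ℝ) := by
      ext k j; simp [I, Matrix.one_apply]
    show Matrix.det (Matrix.of I) = 1
    rw [this, Matrix.det_one]
  have key := MultilinearMap.norm_image_sub_le_of_bound f
    (C := (n ! : ℝ)) (by positivity) (fun m => aux_det_bound m) P I
  rw [hfP, hfI] at key
  simp only [Fintype.card_fin] at key
  have hPI : ‖P - I‖ ≤ Cc * t := by
    refine (pi_norm_le_iff_of_nonneg (by positivity)).2 fun k => ?_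
    refine (pi_norm_le_iff_of_nonneg (by positivity)).2 fun j => ?_
    simpa [Real.norm_eq_abs] using h k j
  have hPn : ‖P‖ ≤ 1 + Cc := by
    refine (pi_norm_le_iff_of_nonneg (by positivity)).2 fun k => ?_
    refine (pi_norm_le_iff_of_nonneg (by positivity)).2 fun j => ?_
    rw [Real.norm_eq_abs]
    have habs : |P k j| ≤ |(if k = j then (1:ℝ) else 0)| + Cc * t := by
      have he : P k j = (if k = j then (1:ℝ) else 0) + (P k j - (if k = j then 1 else 0)) := by
        ring
      rw [he]
      exact (abs_add_le _ _).trans (add_le_add_right (h k j) _)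
    refine habs.trans ?_
    have h1 : |(if k = j then (1:ℝ) else 0)| ≤ 1 := by
      by_cases hkj : k = j <;> simp [hkj]
    nlinarith
  have hIn : ‖I‖ ≤ 1 + Cc := by
    refine (pi_norm_le_iff_of_nonneg (by positivity)).2 fun k => ?_
    refine (pi_norm_le_iff_of_nonneg (by positivity)).2 fun j => ?_
    rw [Real.norm_eq_abs]
    show |(if k = j then (1:ℝ) else 0)| ≤ 1 + Cc
    have h1 : |(if k = j then (1:ℝ) else 0)| ≤ 1 := by
      by_cases hkj : k = j <;> simp [hkj]
    linarith
  have hmax : max ‖P‖ ‖I‖ ≤ 1 + Cc := max_le hPn hIn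
  rw [Real.norm_eq_abs] at key
  calc |Matrix.det (Matrix.of P) - 1|
      ≤ (n ! : ℝ) * n * max ‖P‖ ‖I‖ ^ (n - 1) * ‖P - I‖ := key
    _ ≤ (n ! : ℝ) * n * (1 + Cc) ^ (n - 1) * (Cc * t) := by gcongr
    _ = ((n ! : ℝ) * n * (1 + Cc) ^ (n - 1) * Cc) * t := by ring

end aux

/-- The Assumption on the potential `V`: for every fixed `t`, `V(t,·) ∈ C²(ℝⁿ)`;
the spatial derivatives of order `≤ 2` are (jointly) continuous in `(t,x)`;
and the second spatial derivative is uniformly bounded. -/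
def PotAssumption (n : ℕ) (V : ℝ → EuclideanSpace ℝ (Fin n) → ℝ) : Prop :=
  (∀ t, ContDiff ℝ 2 (V t)) ∧
  (Continuous fun p : ℝ × EuclideanSpace ℝ (Fin n) => V p.1 p.2) ∧
  (Continuous fun p : ℝ × EuclideanSpace ℝ (Fin n) => fderiv ℝ (V p.1) p.2) ∧
  (Continuous fun p : ℝ × EuclideanSpace ℝ (Fin n) => iteratedFDeriv ℝ 2 (V p.1) p.2) ∧
  (∃ C > 0, ∀ t x, ‖iteratedFDeriv ℝ 2 (V t) x‖ ≤ C)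

/-- Let `(x⁽²⁾(s;t,x,ξ), ξ⁽²⁾(s;t,x,ξ))` be the solution of the
Hamiltonian system with `x⁽²⁾(t) = x`, `ξ⁽²⁾(t) = ξ`, and let `D t x ξ` be the
(Fréchet) derivative of `ξ ↦ x⁽²⁾(0;t,x,ξ)`, with entries satisfying
`|∂_{ξ_j} x⁽²⁾_k(0) + δ_{jk} t| ≤ C t²` for `0 < t < T₁`.  Then there exist `T > 0`
and a bounded `r₀` on `(0,T) × ℝⁿ × ℝⁿ` such that for `0 < t < T` the map
`ξ ↦ X = x⁽²⁾(0;t,x,ξ)` is invertible and the absolute value of the Jacobian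
determinant of its inverse equals `t^{−n} + t^{−n+1} r₀(t,x,X)`. -/
theorem stmt_3 (n : ℕ) (hn : 1 ≤ n)
    (V : ℝ → EuclideanSpace ℝ (Fin n) → ℝ) (hV : PotAssumption n V)
    (x2 ξ2 : ℝ → ℝ → EuclideanSpace ℝ (Fin n) → EuclideanSpace ℝ (Fin n) →
      EuclideanSpace ℝ (Fin n))
    (hsol : ∀ (t : ℝ) (x ξ : EuclideanSpace ℝ (Fin n)) (s : ℝ),
      HasDerivAt (fun s' => x2 s' t x ξ) (ξ2 s t x ξ) s ∧
      HasDerivAt (fun s' => ξ2 s' t x ξ) (-(gradient (V s) (x2 s t x ξ))) s)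
    (hic : ∀ (t : ℝ) (x ξ : EuclideanSpace ℝ (Fin n)),
      x2 t t x ξ = x ∧ ξ2 t t x ξ = ξ)
    (D : ℝ → EuclideanSpace ℝ (Fin n) → EuclideanSpace ℝ (Fin n) →
      (EuclideanSpace ℝ (Fin n) →L[ℝ] EuclideanSpace ℝ (Fin n)))
    (hD : ∀ (t : ℝ) (x ξ : EuclideanSpace ℝ (Fin n)),
      HasFDerivAt (fun ξ' => x2 0 t x ξ') (D t x ξ) ξ)
    (T₁ C : ℝ) (hT₁ : 0 < T₁) (hC : 0 < C)
    (hDbound : ∀ t ∈ Set.Ioo (0 : ℝ) T₁, ∀ (x ξ : EuclideanSpace ℝ (Fin n)) (j k : Fin n),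
      |D t x ξ (EuclideanSpace.single j 1) k + (if j = k then t else 0)| ≤ C * t ^ 2) :
    ∃ T > 0, ∃ r₀ : ℝ → EuclideanSpace ℝ (Fin n) → EuclideanSpace ℝ (Fin n) → ℝ,
      (∃ R : ℝ, ∀ t x X, |r₀ t x X| ≤ R) ∧
      ∀ t ∈ Set.Ioo (0 : ℝ) T, ∀ x : EuclideanSpace ℝ (Fin n),
        Function.Bijective (fun ξ => x2 0 t x ξ) ∧
        ∀ ξ : EuclideanSpace ℝ (Fin n),
          |(D t x ξ).det|⁻¹ = t ^ (-(n : ℤ)) + t ^ (-(n : ℤ) + 1) * r₀ t x (x2 0 t x ξ) := by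
  classical
  have hn0 : (0:ℝ) < n := by exact_mod_cast Nat.lt_of_lt_of_le Nat.zero_lt_one hn
  set K : ℝ := (n ! : ℝ) * n * (1 + C) ^ (n - 1) * C with hKdef
  have hK0 : 0 < K := by
    have : (0:ℝ) < (n ! : ℝ) := by exact_mod_cast Nat.factorial_pos n
    positivity
  set T : ℝ := min T₁ (min 1 (min (1 / (2 * (n:ℝ) ^ 2 * C)) (1 / (2 * K)))) with hTdef
  have hT0 : 0 < T := by
    refine lt_min hT₁ (lt_min one_pos (lt_min ?_ ?_)) <;> positivity
  have htfacts : ∀ t ∈ Set.Ioo (0:ℝ) T,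
      0 < t ∧ t < T₁ ∧ t ≤ 1 ∧ (n:ℝ) ^ 2 * C * t ≤ 1/2 ∧ K * t ≤ 1/2 := by
    intro t ht
    obtain ⟨ht0, htT⟩ := ht
    have h1 : t < T₁ := lt_of_lt_of_le htT (min_le_left _ _)
    have h2 : t ≤ 1 := le_of_lt (lt_of_lt_of_le htT ((min_le_right _ _).trans (min_le_left _ _)))
    have h3 : t ≤ 1 / (2 * (n:ℝ) ^ 2 * C) := le_of_lt (lt_of_lt_of_le htT
      ((min_le_right _ _).trans ((min_le_right _ _).trans (min_le_left _ _))))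
    have h4 : t ≤ 1 / (2 * K) := le_of_lt (lt_of_lt_of_le htT
      ((min_le_right _ _).trans ((min_le_right _ _).trans (min_le_right _ _))))
    refine ⟨ht0, h1, h2, ?_, ?_⟩
    · have := mul_le_mul_of_nonneg_left h3 (by positivity : (0:ℝ) ≤ (n:ℝ)^2 * C)
      calc (n:ℝ)^2 * C * t ≤ (n:ℝ)^2 * C * (1 / (2 * (n:ℝ)^2 * C)) := this
        _ = 1/2 := by field_simp
    · have := mul_le_mul_of_nonneg_left h4 (le_of_lt hK0)
      calc K * t ≤ K * (1 / (2 * K)) := this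
        _ = 1/2 := by field_simp <;> ring
  -- unique solvability
  have hkey : ∀ t ∈ Set.Ioo (0:ℝ) T, ∀ (x X : EuclideanSpace ℝ (Fin n)),
      ∃! ξ, x2 0 t x ξ = X := by
    intro t ht x X
    obtain ⟨ht0, htT₁, ht1, hhalf, -⟩ := htfacts t ht
    set G : EuclideanSpace ℝ (Fin n) → EuclideanSpace ℝ (Fin n) :=
      fun ξ => ξ + t⁻¹ • (x2 0 t x ξ - X) with hGdef
    have hder : ∀ ξ, HasFDerivAt G
        (ContinuousLinearMap.id ℝ (EuclideanSpace ℝ (Fin n)) + t⁻¹ • D t x ξ) ξ := fun ξ =>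
      (hasFDerivAt_id ξ).add (((hD t x ξ).sub_const X).const_smul t⁻¹)
    have hopn : ∀ ξ, ‖ContinuousLinearMap.id ℝ (EuclideanSpace ℝ (Fin n)) + t⁻¹ • D t x ξ‖
        ≤ 1/2 := by
      intro ξ
      have hent : ∀ j k,
          |(ContinuousLinearMap.id ℝ (EuclideanSpace ℝ (Fin n)) + t⁻¹ • D t x ξ)
            (EuclideanSpace.single j 1) k| ≤ C * t := by
        intro j k
        have hb := hDbound t ⟨ht0, htT₁⟩ x ξ j k
        have hcoord : ((ContinuousLinearMap.id ℝ (EuclideanSpace ℝ (Fin n)) + t⁻¹ • D t x ξ)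
            (EuclideanSpace.single j 1)) k
            = (if j = k then 1 else 0) + t⁻¹ * (D t x ξ (EuclideanSpace.single j 1) k) := by
          simp [ContinuousLinearMap.add_apply, ContinuousLinearMap.coe_smul',
            EuclideanSpace.single_apply, PiLp.add_apply, PiLp.smul_apply, smul_eq_mul,
            eq_comm]
        rw [hcoord]
        have heq : (if j = k then (1:ℝ) else 0) + t⁻¹ * (D t x ξ (EuclideanSpace.single j 1) k)
            = t⁻¹ * (D t x ξ (EuclideanSpace.single j 1) k + (if j = k then t else 0)) := by
          by_cases hjk : j = k <;> simp [hjk] <;> field_simp <;> ring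
        rw [heq, abs_mul, abs_inv, abs_of_pos ht0]
        calc t⁻¹ * |D t x ξ (EuclideanSpace.single j 1) k + (if j = k then t else 0)|
            ≤ t⁻¹ * (C * t ^ 2) := by gcongr
          _ = C * t := by field_simp
      refine (aux_opnorm_le _ (C * t) (by positivity) hent).trans ?_
      calc (n:ℝ) ^ 2 * (C * t) = (n:ℝ) ^ 2 * C * t := by ring
        _ ≤ 1/2 := hhalf
    have hlip : LipschitzWith (1/2 : ℝ≥0) G := by
      rw [← lipschitzOnWith_univ]
      refine Convex.lipschitzOnWith_of_nnnorm_hasFDerivWithin_le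
        (f' := fun ξ => ContinuousLinearMap.id ℝ (EuclideanSpace ℝ (Fin n)) + t⁻¹ • D t x ξ)
        (fun ξ _ => (hder ξ).hasFDerivWithinAt) (fun ξ _ => ?_) convex_univ
      rw [← NNReal.coe_le_coe, coe_nnnorm]
      push_cast
      exact hopn ξ
    have hcontr : ContractingWith (1/2 : ℝ≥0) G := ⟨by rw [← NNReal.coe_lt_coe]; push_cast; norm_num, hlip⟩
    have hfix : ∀ ξ, G ξ = ξ ↔ x2 0 t x ξ = X := by
      intro ξ
      constructor
      · intro h
        have h2 : t⁻¹ • (x2 0 t x ξ - X) = 0 := by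
          have := h
          rw [hGdef] at this
          simpa using (add_eq_left).1 this
        have h3 : x2 0 t x ξ - X = 0 := by
          rcases smul_eq_zero.1 h2 with h | h
          · exact absurd h (inv_ne_zero (ne_of_gt ht0))
          · exact h
        exact sub_eq_zero.1 h3
      · intro h
        rw [hGdef]
        simp [h]
    obtain ⟨ξ₀, hξ₀⟩ : ∃ ξ₀, Function.IsFixedPt G ξ₀ :=
      ⟨ContractingWith.fixedPoint G hcontr, ContractingWith.fixedPoint_isFixedPt hcontr⟩
    refine ⟨ξ₀, (hfix ξ₀).1 hξ₀, ?_⟩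
    intro ξ hξ
    exact ContractingWith.fixedPoint_unique' hcontr ((hfix ξ).2 hξ) hξ₀
  -- determinant analysis
  have hdet : ∀ t ∈ Set.Ioo (0:ℝ) T, ∀ (x ξ : EuclideanSpace ℝ (Fin n)), ∃ p : ℝ,
      |(D t x ξ).det| = t ^ n * p ∧ |p - 1| ≤ K * t ∧ 1/2 ≤ p := by
    intro t ht x ξ
    obtain ⟨ht0, htT₁, ht1, -, hKt⟩ := htfacts t ht
    have ht0' : t ≠ 0 := ne_of_gt ht0
    set P : Fin n → Fin n → ℝ :=
      fun k j => -t⁻¹ * (D t x ξ (EuclideanSpace.single j 1) k) with hP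
    have hPbound : ∀ k j, |P k j - (if k = j then 1 else 0)| ≤ C * t := by
      intro k j
      have hb := hDbound t ⟨ht0, htT₁⟩ x ξ j k
      have heq : P k j - (if k = j then 1 else 0)
          = -t⁻¹ * (D t x ξ (EuclideanSpace.single j 1) k + (if j = k then t else 0)) := by
        rw [hP]
        by_cases hjk : j = k
        · subst hjk; simp; field_simp; ring
        · have hkj : ¬ k = j := fun h => hjk h.symm
          simp [hjk, hkj]
      rw [heq, abs_mul, abs_neg, abs_inv, abs_of_pos ht0]
      calc t⁻¹ * |D t x ξ (EuclideanSpace.single j 1) k + (if j = k then t else 0)|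
          ≤ t⁻¹ * (C * t ^ 2) := by gcongr
        _ = C * t := by field_simp <;> ring
    have hdet1 : |Matrix.det (Matrix.of P) - 1| ≤ K * t :=
      aux_det_sub_one C t hC.le ht0.le ht1 P hPbound
    have hMat : LinearMap.toMatrix (EuclideanSpace.basisFun (Fin n) ℝ).toBasis
        (EuclideanSpace.basisFun (Fin n) ℝ).toBasis
        ((D t x ξ : EuclideanSpace ℝ (Fin n) →ₗ[ℝ] EuclideanSpace ℝ (Fin n)))
        = (-t) • Matrix.of P := by
      ext k j
      rw [LinearMap.toMatrix_apply]
      simp only [OrthonormalBasis.coe_toBasis, OrthonormalBasis.coe_toBasis_repr_apply,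
        EuclideanSpace.basisFun_repr, EuclideanSpace.basisFun_apply, Matrix.smul_apply,
        Matrix.of_apply, ContinuousLinearMap.coe_coe, hP, smul_eq_mul]
      field_simp
    have hdetD : (D t x ξ).det = (-t) ^ n * Matrix.det (Matrix.of P) := by
      have h1 := LinearMap.det_toMatrix (EuclideanSpace.basisFun (Fin n) ℝ).toBasis
        ((D t x ξ : EuclideanSpace ℝ (Fin n) →ₗ[ℝ] EuclideanSpace ℝ (Fin n)))
      rw [ContinuousLinearMap.det, ← h1, hMat, Matrix.det_smul]
      simp [Fintype.card_fin]
    refine ⟨|Matrix.det (Matrix.of P)|, ?_, ?_, ?_⟩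
    · rw [hdetD, abs_mul, abs_pow, abs_neg, abs_of_pos ht0]
    · have h3 := abs_abs_sub_abs_le_abs_sub (Matrix.det (Matrix.of P)) (1:ℝ)
      rw [abs_one] at h3
      exact h3.trans hdet1
    · have h2 : 1 - |Matrix.det (Matrix.of P)| ≤ |Matrix.det (Matrix.of P) - 1| := by
        have := abs_sub_abs_le_abs_sub (1:ℝ) (Matrix.det (Matrix.of P))
        rw [abs_one, abs_sub_comm] at this
        exact this
      linarith
  -- assemble
  refine ⟨T, hT0, fun t x X => if h : t ∈ Set.Ioo (0:ℝ) T then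
      t ^ (n-1) * |(D t x ((hkey t h x X).exists.choose)).det|⁻¹ - t⁻¹ else 0,
    ⟨2*K, ?_⟩, ?_⟩
  · intro t x X
    by_cases h : t ∈ Set.Ioo (0:ℝ) T
    · beta_reduce
      rw [dif_pos h]
      obtain ⟨ht0, -, -, -, hKt⟩ := htfacts t h
      have ht0' : t ≠ 0 := ne_of_gt ht0
      obtain ⟨p, hp1, hp2, hp3⟩ := hdet t h x ((hkey t h x X).exists.choose)
      rw [hp1]
      have hp0 : 0 < p := lt_of_lt_of_le one_half_pos hp3
      have hpow : (t:ℝ) ^ n = t ^ (n-1) * t := by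
        rw [← pow_succ, Nat.sub_add_cancel hn]
      have hexp : t ^ (n-1) * (t ^ n * p)⁻¹ - t⁻¹ = (1 - p) / (t * p) := by
        rw [hpow]
        have h1 : (t:ℝ) ^ (n-1) ≠ 0 := pow_ne_zero _ ht0'
        field_simp
      rw [hexp, abs_div, abs_of_pos (by positivity : (0:ℝ) < t * p)]
      rw [div_le_iff₀ (by positivity : (0:ℝ) < t * p)]
      have h5 : |1 - p| ≤ K * t := by rw [abs_sub_comm]; exact hp2
      nlinarith [mul_nonneg (mul_nonneg hK0.le ht0.le)
        (by linarith : (0:ℝ) ≤ 2*p - 1)]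
    · beta_reduce
      rw [dif_neg h]
      simp only [abs_zero]
      positivity
  · intro t ht x
    obtain ⟨ht0, -, -, -, -⟩ := htfacts t ht
    have ht0' : t ≠ 0 := ne_of_gt ht0
    have hbij : Function.Bijective (fun ξ => x2 0 t x ξ) := by
      constructor
      · intro a b hab
        obtain ⟨ξu, hu, huniq⟩ := hkey t ht x (x2 0 t x b)
        have ha := huniq a hab
        have hb := huniq b rfl
        rw [ha, hb]
      · intro X
        exact ⟨(hkey t ht x X).exists.choose, (hkey t ht x X).exists.choose_spec⟩
    refine ⟨hbij, ?_⟩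
    intro ξ
    have hch : (hkey t ht x (x2 0 t x ξ)).exists.choose = ξ :=
      (hkey t ht x (x2 0 t x ξ)).unique
        (hkey t ht x (x2 0 t x ξ)).exists.choose_spec rfl
    beta_reduce
    rw [dif_pos ht, hch]
    obtain ⟨p, hp1, hp2, hp3⟩ := hdet t ht x ξ
    rw [hp1]
    have hp0 : 0 < p := lt_of_lt_of_le one_half_pos hp3
    have hz1 : (t:ℝ) ^ (-(n:ℤ)) = (t ^ n)⁻¹ := by rw [zpow_neg, zpow_natCast]
    have hz2 : (t:ℝ) ^ (-(n:ℤ)+1) = (t ^ (n-1))⁻¹ := by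
      have hc : ((n-1:ℕ):ℤ) = (n:ℤ) - 1 := by
        push_cast [Nat.cast_sub hn]
        ring
      rw [show (-(n:ℤ)+1) = -((n:ℤ)-1) by ring, ← hc, zpow_neg, zpow_natCast]
    rw [hz1, hz2]
    have hpow : (t:ℝ) ^ n = t ^ (n-1) * t := by
      rw [← pow_succ, Nat.sub_add_cancel hn]
    rw [hpow]
    have h1 : (t:ℝ) ^ (n-1) ≠ 0 := pow_ne_zero _ ht0'
    field_simp
    ring
end

section
/- Let V satisfy the Assumption, let M = sup{|∂ₓ^α V(t,x)| : (t,x) ∈ ℝ^{1+n}, |α| = 2}, and fix 0 < T < π/√M. For t ∈ (0,T) and x, y, x′, ξ ∈ ℝⁿ, let (x^{(1)}(s), ξ^{(1)}(s)) = (x^{(1)}(s;t,x,y), ξ^{(1)}(s;t,x,y)) solve the Hamiltonian system with x^{(1)}(0) = y, x^{(1)}(t) = x, and let (x^{(2)}(s), ξ^{(2)}(s)) = (x^{(2)}(s;t,x′,ξ), ξ^{(2)}(s;t,x′,ξ)) solve it with x^{(2)}(t) = x′, ξ^{(2)}(t) = ξ. Then there exists C₁ > 0 such that |x^{(1)}(s;t,x,y)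 − x^{(2)}(s;t,x′,ξ)| ≤ C₁ ( |x − x′| + |y − x^{(2)}(0;t,x′,ξ)| ) for all 0 ≤ s ≤ t, 0 < t < T and x, y, x′, ξ ∈ ℝⁿ. -/
open MeasureTheory
open scoped Real

open Set Filter Topology Real

theorem le_max_of_hasDerivAt_of_deriv_eq_zero_imp_pos {f f' f'' : ℝ → ℝ} {a b : ℝ}
    (hf : ∀ x ∈ Icc a b, HasDerivAt f (f' x) x)
    (hf' : ∀ x ∈ Ioo a b, HasDerivAt f' (f'' x) x)
    (hcrit : ∀ x ∈ Ioo a b, f' x = 0 → 0 < f'' x) :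
    ∀ x ∈ Icc a b, f x ≤ max (f a) (f b) := by
  intro x hx
  obtain ⟨x₀, hx₀, hmax⟩ := isCompact_Icc.exists_isMaxOn ⟨x, hx⟩
    fun y hy => (hf y hy).continuousAt.continuousWithinAt
  suffices x₀ = a ∨ x₀ = b by
    rcases this with rfl | rfl
    · exact le_max_of_le_left (hmax hx)
    · exact le_max_of_le_right (hmax hx)
  by_contra! hne
  have hx₀I : x₀ ∈ Ioo a b := ⟨hx₀.1.lt_of_ne hne.1.symm, hx₀.2.lt_of_ne hne.2⟩
  have hderiv : deriv f =ᶠ[𝓝 x₀] f' := by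
    filter_upwards [Ioo_mem_nhds hx₀I.1 hx₀I.2] with y hy
    exact (hf y (Ioo_subset_Icc_self hy)).deriv
  have hlocmax : IsLocalMax f x₀ := hmax.isLocalMax (Icc_mem_nhds hx₀I.1 hx₀I.2)
  have hpos : 0 < deriv (deriv f) x₀ := by
    rw [hderiv.deriv_eq, (hf' x₀ hx₀I).deriv]
    exact hcrit x₀ hx₀I (hderiv.eq_of_nhds ▸ hlocmax.deriv_eq_zero)
  have hlocmin : IsLocalMin f x₀ :=
    isLocalMin_of_deriv_deriv_pos hpos hlocmax.deriv_eq_zero (hf x₀ hx₀).continuousAt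
  have hconst : f =ᶠ[𝓝 x₀] fun _ => f x₀ :=
    (hlocmin.and hlocmax).mono fun y hy => le_antisymm hy.2 hy.1
  have : deriv (deriv f) x₀ = 0 := by
    rw [hconst.deriv.deriv_eq]
    simp
  exact hpos.ne' this

theorem cos_le_cos_mul_sub_half {r t s : ℝ} (hr : 0 ≤ r) (hrt : r * t < π) (hs : s ∈ Icc 0 t) :
    cos (r * t / 2) ≤ cos (r * (s - t / 2)) := by
  rw [← cos_abs (r * (s - t / 2))]
  have hst : |s - t / 2| ≤ t / 2 := abs_le.2 ⟨by linarith [hs.1], by linarith [hs.2]⟩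
  apply cos_le_cos_of_nonneg_of_le_pi (abs_nonneg _) (by nlinarith [hs.1.trans hs.2])
  rw [abs_mul, abs_of_nonneg hr]
  nlinarith

theorem mul_cos_le_max_of_strict_supersolution {K t : ℝ} {u u' u'' : ℝ → ℝ} (hK : 0 ≤ K)
    (htK : √K * t < π) (hu : ∀ s, HasDerivAt u (u' s) s) (hu' : ∀ s, HasDerivAt u' (u'' s) s)
    (hsuper : ∀ s ∈ Ioo 0 t, 0 < u'' s + K * u s) (hu₀ : 0 ≤ u 0) :
    ∀ s ∈ Icc 0 t, u s * cos (√K * t / 2) ≤ max (u 0) (u t) := by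
  intro s hs
  have ht : 0 ≤ t := hs.1.trans hs.2
  set r := √K
  have hr : 0 ≤ r := sqrt_nonneg K
  have hrr : r * r = K := mul_self_sqrt hK
  set δ := cos (r * t / 2)
  have hδ : 0 < δ := cos_pos_of_mem_Ioo ⟨by nlinarith [pi_pos], by linarith⟩
  -- the comparison solution `c'' = -K c`, symmetric about `t / 2` and positive on `[0, t]`
  set c : ℝ → ℝ := fun s => cos (r * (s - t / 2))
  set c' : ℝ → ℝ := fun s => -sin (r * (s - t / 2)) * r
  have hlin (s : ℝ) : HasDerivAt (fun s => r * (s - t / 2)) r s := by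
    simpa using ((hasDerivAt_id s).sub_const (t / 2)).const_mul r
  have hc (s : ℝ) : HasDerivAt c (c' s) s := (hlin s).cos
  have hc' (s : ℝ) : HasDerivAt c' (-(K * c s)) s := by
    refine ((hlin s).sin.neg.mul_const r).congr_deriv ?_
    rw [← hrr]; ring
  have hδc : ∀ s ∈ Icc 0 t, δ ≤ c s := fun s hs => cos_le_cos_mul_sub_half hr htK hs
  have hcpos : ∀ s ∈ Icc 0 t, 0 < c s := fun s hs => hδ.trans_le (hδc s hs)
  have hc0 : c 0 = δ := by
    show cos (r * (0 - t / 2)) = cos (r * t / 2)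
    rw [← cos_neg]; congr 1; ring
  have hct : c t = δ := by
    show cos (r * (t - t / 2)) = cos (r * t / 2)
    congr 1; ring
  -- at an interior critical point of `u / c`, `(u / c)'' = (u'' + K u) / c > 0`
  set N : ℝ → ℝ := fun s => u' s * c s - u s * c' s
  have hq (s : ℝ) (hs : s ∈ Icc 0 t) :
      HasDerivAt (fun s => u s / c s) (N s / c s ^ 2) s :=
    (hu s).div (hc s) (hcpos s hs).ne'
  have hq' (s : ℝ) (hs : s ∈ Ioo 0 t) : HasDerivAt (fun s => N s / c s ^ 2)
      (((u'' s + K * u s) * c s * c s ^ 2 - N s * (2 * c s * c' s)) / (c s ^ 2) ^ 2) s := by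
    have hN : HasDerivAt N ((u'' s + K * u s) * c s) s := by
      refine (((hu' s).mul (hc s)).sub ((hu s).mul (hc' s))).congr_deriv ?_; ring
    have hc2 : HasDerivAt (fun s => c s ^ 2) (2 * c s * c' s) s := by
      refine ((hc s).pow 2).congr_deriv ?_; ring
    exact hN.div hc2 (pow_ne_zero 2 (hcpos s (Ioo_subset_Icc_self hs)).ne')
  have hmax := le_max_of_hasDerivAt_of_deriv_eq_zero_imp_pos hq hq' (fun s hs hN0 => by
    have hcs := hcpos s (Ioo_subset_Icc_self hs)
    have hNs : N s = 0 := by simpa [hcs.ne'] using hN0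
    rw [hNs, zero_mul, sub_zero]
    have := hsuper s hs
    positivity) s hs
  simp only [hc0, hct, max_div_div_right hδ.le] at hmax
  have hm : 0 ≤ max (u 0) (u t) / δ := div_nonneg (le_max_of_le_left hu₀) hδ.le
  have hus : u s ≤ max (u 0) (u t) / δ := calc
    u s = u s / c s * c s := (div_mul_cancel₀ _ (hcpos s hs).ne').symm
    _ ≤ max (u 0) (u t) / δ * c s := mul_le_mul_of_nonneg_right hmax (hcpos s hs).le
    _ ≤ max (u 0) (u t) / δ := mul_le_of_le_one_right hm (cos_le_one _)
  rwa [le_div_iff₀ hδ] at hus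

theorem norm_mul_cos_le_max_of_norm_deriv_deriv_le {E : Type*} [NormedAddCommGroup E]
    [InnerProductSpace ℝ E] {K t : ℝ} {w v g : ℝ → E} (hK : 0 < K) (htK : √K * t < π)
    (hw : ∀ s, HasDerivAt w (v s) s) (hv : ∀ s, HasDerivAt v (g s) s)
    (hg : ∀ s, ‖g s‖ ≤ K * ‖w s‖) :
    ∀ s ∈ Icc 0 t, ‖w s‖ * cos (√K * t / 2) ≤ max ‖w 0‖ ‖w t‖ := by
  intro s hs
  set δ := cos (√K * t / 2)
  have hδ : 0 ≤ δ := cos_nonneg_of_mem_Icc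
    ⟨by nlinarith [pi_pos, sqrt_nonneg K, hs.1.trans hs.2], by linarith⟩
  -- `‖w‖` need not be differentiable: `u = √(‖w‖² + ε)` is a smooth strict supersolution instead
  have hreg : ∀ ε > 0, √(‖w s‖ ^ 2 + ε) * δ ≤ max √(‖w 0‖ ^ 2 + ε) √(‖w t‖ ^ 2 + ε) := by
    intro ε hε
    set u : ℝ → ℝ := fun s => √(‖w s‖ ^ 2 + ε)
    set p : ℝ → ℝ := fun s => inner ℝ (w s) (v s)
    have hF (s : ℝ) : 0 < ‖w s‖ ^ 2 + ε := by positivity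
    have hupos (s : ℝ) : 0 < u s := sqrt_pos.2 (hF s)
    have husq (s : ℝ) : u s ^ 2 = ‖w s‖ ^ 2 + ε := sq_sqrt (hF s).le
    have hu (s : ℝ) : HasDerivAt u (p s / u s) s := by
      refine (((hw s).norm_sq).add_const ε).sqrt (hF s).ne' |>.congr_deriv ?_
      exact mul_div_mul_left _ _ two_ne_zero
    have hp (s : ℝ) : HasDerivAt p (‖v s‖ ^ 2 + inner ℝ (w s) (g s)) s := by
      refine ((hw s).inner ℝ (hv s)).congr_deriv ?_
      rw [real_inner_self_eq_norm_sq]; ring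
    have hu' (s : ℝ) : HasDerivAt (fun s => p s / u s)
        (((‖v s‖ ^ 2 + inner ℝ (w s) (g s)) * u s - p s * (p s / u s)) / u s ^ 2) s :=
      (hp s).div (hu s) (hupos s).ne'
    refine mul_cos_le_max_of_strict_supersolution hK.le htK hu hu' (fun s _ => ?_) (hupos 0).le s hs
    have hcs : p s ^ 2 ≤ ‖w s‖ ^ 2 * ‖v s‖ ^ 2 := by
      rw [← mul_pow, sq_le_sq, abs_mul, abs_norm, abs_norm]
      exact abs_real_inner_le_norm _ _
    have hwg : -(K * ‖w s‖ ^ 2) ≤ inner ℝ (w s) (g s) := by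
      have := neg_abs_le (inner ℝ (w s) (g s))
      have := abs_real_inner_le_norm (w s) (g s)
      nlinarith [hg s, norm_nonneg (w s)]
    set A := ‖v s‖ ^ 2 + inner ℝ (w s) (g s)
    have hfrac : (A * u s - p s * (p s / u s)) / u s ^ 2 + K * u s =
        (A * u s ^ 2 - p s ^ 2 + K * u s ^ 2 * u s ^ 2) / u s ^ 3 := by
      field_simp
    -- by the two bounds above, the numerator is at least `ε (‖v‖² + K u²)`
    have hnum : 0 < A * u s ^ 2 - p s ^ 2 + K * u s ^ 2 * u s ^ 2 := by
      rw [husq]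
      nlinarith [mul_le_mul_of_nonneg_right hwg (hF s).le, sq_nonneg ‖v s‖, mul_pos hK (hF s)]
    rw [hfrac]
    exact div_pos hnum (pow_pos (hupos s) 3)
  have hcont : Continuous fun ε => max √(‖w 0‖ ^ 2 + ε) √(‖w t‖ ^ 2 + ε) := by fun_prop
  have hlim := (hcont.tendsto 0).mono_left (nhdsWithin_le_nhds (s := Ioi 0))
  simp only [add_zero, sqrt_sq (norm_nonneg _)] at hlim
  refine ge_of_tendsto hlim ?_
  filter_upwards [self_mem_nhdsWithin] with ε hε
  calc ‖w s‖ * δ ≤ √(‖w s‖ ^ 2 + ε) * δ := by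
        gcongr
        exact le_sqrt_of_sq_le (by linarith [mem_Ioi.1 hε])
    _ ≤ _ := hreg ε hε

theorem norm_gradient_sub_le_of_norm_iteratedFDeriv_two_le {E : Type*} [NormedAddCommGroup E]
    [InnerProductSpace ℝ E] [CompleteSpace E] {f : E → ℝ} {M : ℝ} (hf : ContDiff ℝ 2 f)
    (hM : ∀ x, ‖iteratedFDeriv ℝ 2 f x‖ ≤ M) (a b : E) :
    ‖gradient f a - gradient f b‖ ≤ M * ‖a - b‖ := by
  have hdiff : Differentiable ℝ (fderiv ℝ f) :=
    (hf.fderiv_right (by norm_num)).differentiable one_ne_zero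
  have hbound : ∀ x ∈ univ, ‖fderiv ℝ (fderiv ℝ f) x‖ ≤ M := fun x _ => by
    calc ‖fderiv ℝ (fderiv ℝ f) x‖ = ‖iteratedFDeriv ℝ 0 (fderiv ℝ (fderiv ℝ f)) x‖ := by
          rw [norm_iteratedFDeriv_zero]
      _ = ‖iteratedFDeriv ℝ 2 f x‖ := by
          rw [norm_iteratedFDeriv_fderiv, norm_iteratedFDeriv_fderiv]
      _ ≤ M := hM x
  rw [gradient, gradient, ← map_sub, LinearIsometryEquiv.norm_map]
  exact convex_univ.norm_image_sub_le_of_norm_fderiv_le (fun x _ => hdiff x) hbound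
    (mem_univ b) (mem_univ a)

theorem exists_pos_le_sqrt_mul_lt {M T L : ℝ} (hT : 0 < T) (hTM : T * √M < L) :
    ∃ K, 0 < K ∧ M ≤ K ∧ √K * T < L := by
  have hL : 0 < L := (mul_nonneg hT.le (sqrt_nonneg M)).trans_lt hTM
  refine ⟨max M ((L / (2 * T)) ^ 2), lt_max_of_lt_right (by positivity), le_max_left _ _, ?_⟩
  rcases max_cases M ((L / (2 * T)) ^ 2) with ⟨h, -⟩ | ⟨h, -⟩
  · rwa [h, mul_comm]
  · rw [h, sqrt_sq (by positivity), div_mul_eq_mul_div, mul_div_mul_right _ _ hT.ne']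
    linarith

/-- Under the Assumption, with
`M = sup |∂ₓ²V|` and `0 < T < π/√M` (encoded as `T·√M < π`), there is `C₁ > 0` such that
whenever `(x⁽¹⁾, ξ⁽¹⁾)` solves the Hamiltonian system with `x⁽¹⁾(0) = y`, `x⁽¹⁾(t) = x`
and `(x⁽²⁾, ξ⁽²⁾)` solves it with `x⁽²⁾(t) = x′`, `ξ⁽²⁾(t) = ξ`, then
`|x⁽¹⁾(s) − x⁽²⁾(s)| ≤ C₁ (|x − x′| + |y − x⁽²⁾(0)|)` for all `0 ≤ s ≤ t < T`. -/
theorem stmt_5 (n : ℕ) (V : ℝ → EuclideanSpace ℝ (Fin n) → ℝ) (hV : PotAssumption n V)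
    (M : ℝ)
    (hM : M = ⨆ p : ℝ × EuclideanSpace ℝ (Fin n), ‖iteratedFDeriv ℝ 2 (V p.1) p.2‖)
    (T : ℝ) (hT : 0 < T) (hTM : T * Real.sqrt M < π) :
    ∃ C₁ > 0, ∀ t ∈ Set.Ioo (0 : ℝ) T, ∀ x y x' ξ : EuclideanSpace ℝ (Fin n),
      ∀ x1 ξ1 x2 ξ2 : ℝ → EuclideanSpace ℝ (Fin n),
        (∀ s, HasDerivAt x1 (ξ1 s) s ∧ HasDerivAt ξ1 (-(gradient (V s) (x1 s))) s) →
        x1 0 = y → x1 t = x →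
        (∀ s, HasDerivAt x2 (ξ2 s) s ∧ HasDerivAt ξ2 (-(gradient (V s) (x2 s))) s) →
        x2 t = x' → ξ2 t = ξ →
        ∀ s ∈ Set.Icc (0 : ℝ) t,
          ‖x1 s - x2 s‖ ≤ C₁ * (‖x - x'‖ + ‖y - x2 0‖) := by
  obtain ⟨C, -, hC⟩ := hV.2.2.2.2
  have hMle (τ : ℝ) (z : EuclideanSpace ℝ (Fin n)) : ‖iteratedFDeriv ℝ 2 (V τ) z‖ ≤ M :=
    hM ▸ le_ciSup ⟨C, by rintro _ ⟨p, rfl⟩; exact hC p.1 p.2⟩ (τ, z)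
  obtain ⟨K, hK, hMK, hKT⟩ := exists_pos_le_sqrt_mul_lt hT hTM
  have hKT0 : 0 ≤ √K * T := by positivity
  have hδ : 0 < cos (√K * T / 2) := cos_pos_of_mem_Ioo ⟨by linarith [pi_pos], by linarith⟩
  refine ⟨(cos (√K * T / 2))⁻¹, inv_pos.2 hδ, ?_⟩
  rintro t ⟨ht, htT⟩ x y x' ξ x1 ξ1 x2 ξ2 h1 rfl rfl h2 rfl - s hs
  have hforce (τ : ℝ) :
      ‖-gradient (V τ) (x1 τ) - -gradient (V τ) (x2 τ)‖ ≤ K * ‖x1 τ - x2 τ‖ := by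
    rw [← neg_sub', norm_neg]
    exact (norm_gradient_sub_le_of_norm_iteratedFDeriv_two_le (hV.1 τ) (hMle τ) _ _).trans
      (mul_le_mul_of_nonneg_right hMK (norm_nonneg _))
  have hcomp := norm_mul_cos_le_max_of_norm_deriv_deriv_le hK
    ((mul_le_mul_of_nonneg_left htT.le (sqrt_nonneg K)).trans_lt hKT)
    (fun τ => (h1 τ).1.sub (h2 τ).1) (fun τ => (h1 τ).2.sub (h2 τ).2) hforce s hs
  have hcos : cos (√K * T / 2) ≤ cos (√K * t / 2) :=
    cos_le_cos_of_nonneg_of_le_pi (by positivity) (by linarith) (by gcongr)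
  rw [inv_mul_eq_div, le_div_iff₀ hδ]
  calc ‖x1 s - x2 s‖ * cos (√K * T / 2) ≤ ‖x1 s - x2 s‖ * cos (√K * t / 2) := by gcongr
    _ ≤ max ‖x1 0 - x2 0‖ ‖x1 t - x2 t‖ := hcomp
    _ ≤ ‖x1 t - x2 t‖ + ‖x1 0 - x2 0‖ := max_le (le_add_of_nonneg_left (norm_nonneg _))
        (le_add_of_nonneg_right (norm_nonneg _))
end

section
/- Let V satisfy the Assumption, let M = sup{|∂ₓ^α V(t,x)| : (t,x) ∈ ℝ^{1+n}, |α| = 2}, and fix 0 < T < π/√M. For t ∈ (0,T) and x, y, x′, ξ ∈ ℝⁿ, let (x^{(1)}(s), ξ^{(1)}(s)) solve the Hamiltonian system with x^{(1)}(0) = y, x^{(1)}(t) = x, and let (x^{(2)}(s), ξ^{(2)}(s)) solve it with x^{(2)}(t) = x′, ξ^{(2)}(t) = ξ. Then there exists C₂ > 0 such that | ξ^{(1)}(s) − ξ^{(2)}(s) − ((x − x′) − (y − x^{(2)}(0)))/t | ≤ C₂ t ( |x − x′| + |y − x^{(2)}(0)| ) for all 0 ≤ s ≤ t, 0 < t <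 T and x, y, x′, ξ ∈ ℝⁿ. -/
open MeasureTheory
open scoped Real

open intervalIntegral
open scoped RealInnerProductSpace

set_option maxHeartbeats 1600000

section helpers
variable {E : Type*} [NormedAddCommGroup E] [InnerProductSpace ℝ E] [CompleteSpace E]

lemma grad_lip {f : E → ℝ} (hf : ContDiff ℝ 2 f) {M : ℝ}
    (hb : ∀ x, ‖iteratedFDeriv ℝ 2 f x‖ ≤ M) (a b : E) :
    ‖gradient f a - gradient f b‖ ≤ M * ‖a - b‖ := by
  have h1 : ‖gradient f a - gradient f b‖ = ‖fderiv ℝ f a - fderiv ℝ f b‖ := by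
    rw [gradient, gradient, ← map_sub]
    exact LinearIsometryEquiv.norm_map _ _
  rw [h1]
  have hgd : ContDiff ℝ 1 (iteratedFDeriv ℝ 1 f) := by
    apply hf.iteratedFDeriv_right
    norm_num
  have key : ‖iteratedFDeriv ℝ 1 f a - iteratedFDeriv ℝ 1 f b‖ ≤ M * ‖a - b‖ := by
    apply (convex_univ (𝕜 := ℝ) (E := E)).norm_image_sub_le_of_norm_fderiv_le
      (fun x _ => (hgd.differentiable one_ne_zero).differentiableAt)
      (fun x _ => by rw [norm_fderiv_iteratedFDeriv]; exact hb x) (Set.mem_univ b) (Set.mem_univ a)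
  have h2 : ∀ x : E, iteratedFDeriv ℝ 1 f x
      = (continuousMultilinearCurryFin1 ℝ E ℝ).symm (fderiv ℝ f x) := by
    intro x; ext m; simp
  rw [h2, h2, ← map_sub] at key
  rwa [LinearIsometryEquiv.norm_map] at key


omit [CompleteSpace E] in
lemma wirtinger_left (u u' : ℝ → E) (hu : ∀ s, HasDerivAt u (u' s) s) (hcu' : Continuous u')
    {a b : ℝ} (hab : a < b) (h0 : u a = 0) :
    ∫ s in a..b, ‖u s‖ ^ 2 ≤ (2 * (b - a) / π) ^ 2 * ∫ s in a..b, ‖u' s‖ ^ 2 := by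
  have hcu : Continuous u := continuous_iff_continuousAt.2 fun s => (hu s).continuousAt
  set L : ℝ := b - a with hLdef
  have hL : 0 < L := by simp only [hLdef]; linarith
  set k : ℝ := π / (2 * L) with hkdef
  have hk : 0 < k := by positivity
  have hkL : k * L = π / 2 := by rw [hkdef]; field_simp
  clear_value L k
  -- bounds on u and u'
  obtain ⟨K, hK⟩ := (isCompact_Icc (a := a) (b := b)).exists_bound_of_continuousOn hcu'.continuousOn
  obtain ⟨Ku, hKu⟩ := (isCompact_Icc (a := a) (b := b)).exists_bound_of_continuousOn hcu.continuousOn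
  have hK0 : 0 ≤ K := le_trans (norm_nonneg _) (hK a (by constructor <;> linarith))
  have hKu0 : 0 ≤ Ku := le_trans (norm_nonneg _) (hKu a (by constructor <;> linarith))
  -- mean value bound near a
  have hub : ∀ s ∈ Set.Icc a b, ‖u s‖ ≤ K * (s - a) := by
    intro s hs
    have := (convex_Icc a b).norm_image_sub_le_of_norm_hasDerivWithin_le
      (f := u) (f' := u') (C := K) (fun x hx => (hu x).hasDerivWithinAt) hK
      (Set.left_mem_Icc.2 hab.le) hs
    rw [h0, sub_zero] at this
    calc ‖u s‖ ≤ K * ‖s - a‖ := this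
    _ = K * (s - a) := by rw [Real.norm_eq_abs, abs_of_nonneg (by linarith [hs.1])]
  -- integrability of squares
  have hIu : ∀ a' b' : ℝ, IntervalIntegrable (fun s => ‖u s‖ ^ 2) volume a' b' :=
    fun a' b' => ((hcu.norm.pow 2)).intervalIntegrable a' b'
  have hIu' : ∀ a' b' : ℝ, IntervalIntegrable (fun s => ‖u' s‖ ^ 2) volume a' b' :=
    fun a' b' => ((hcu'.norm.pow 2)).intervalIntegrable a' b'
  -- the key estimate with cutoff δ
  have key : ∀ δ : ℝ, 0 < δ → δ ≤ L →
      k ^ 2 * ∫ s in a..b, ‖u s‖ ^ 2 ≤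
        (∫ s in a..b, ‖u' s‖ ^ 2) + δ * (π / 2 * K ^ 2 + k ^ 2 * Ku ^ 2) := by
    intro δ hδ hδL
    have hone : a + δ ≤ b := by simp only [hLdef] at hδL; linarith
    set c : ℝ → ℝ := fun s => k * (Real.cos (k * (s - a)) / Real.sin (k * (s - a))) with hcdef
    set c' : ℝ → ℝ := fun s => -(k ^ 2) / Real.sin (k * (s - a)) ^ 2 with hc'def
    have hsin : ∀ s ∈ Set.Icc (a + δ) b, 0 < Real.sin (k * (s - a)) := by
      intro s hs
      apply Real.sin_pos_of_pos_of_lt_pi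
      · have : δ ≤ s - a := by linarith [hs.1]
        nlinarith
      · have : s - a ≤ L := by simp only [hLdef]; linarith [hs.2]
        nlinarith [Real.pi_pos, hkL, hk]
    have hcder : ∀ s ∈ Set.Icc (a + δ) b, HasDerivAt c (c' s) s := by
      intro s hs
      have hθ : HasDerivAt (fun s : ℝ => k * (s - a)) k s := by
        simpa using ((hasDerivAt_id s).sub_const a).const_mul k
      have hd := ((hθ.cos).div (hθ.sin) (ne_of_gt (hsin s hs))).const_mul k
      refine hd.congr_deriv ?_
      have h2 := Real.sin_sq_add_cos_sq (k * (s - a))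
      simp only [hc'def]
      rw [show (-Real.sin (k * (s - a)) * k * Real.sin (k * (s - a)) -
            Real.cos (k * (s - a)) * (Real.cos (k * (s - a)) * k))
          = -k * (Real.sin (k * (s - a)) ^ 2 + Real.cos (k * (s - a)) ^ 2) from by ring, h2]
      ring
    -- derivative of F = c * ‖u‖²
    set DF : ℝ → ℝ := fun s => c' s * ‖u s‖ ^ 2 + c s * (2 * ⟪u s, u' s⟫) with hDFdef
    have hFder : ∀ s ∈ Set.Icc (a + δ) b, HasDerivAt (fun s => c s * ‖u s‖ ^ 2) (DF s) s := by
      intro s hs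
      exact (hcder s hs).mul (hu s).norm_sq
    -- continuity on the interval
    have hccont : ContinuousOn c (Set.Icc (a + δ) b) := by
      apply ContinuousOn.mul continuousOn_const
      apply ContinuousOn.div
      · fun_prop
      · fun_prop
      · exact fun s hs => ne_of_gt (hsin s hs)
    have hc'cont : ContinuousOn c' (Set.Icc (a + δ) b) := by
      apply ContinuousOn.div continuousOn_const
      · fun_prop
      · exact fun s hs => pow_ne_zero 2 (ne_of_gt (hsin s hs))
    have hinner : Continuous fun s => ⟪u s, u' s⟫ := hcu.inner hcu'
    have hDFcont : ContinuousOn DF (Set.Icc (a + δ) b) := by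
      apply ContinuousOn.add
      · exact hc'cont.mul (hcu.norm.pow 2).continuousOn
      · exact hccont.mul (continuousOn_const.mul hinner.continuousOn)
    have huIcc : Set.uIcc (a + δ) b = Set.Icc (a + δ) b := Set.uIcc_of_le hone
    -- FTC
    have hFTC : ∫ s in (a + δ)..b, DF s =
        c b * ‖u b‖ ^ 2 - c (a + δ) * ‖u (a + δ)‖ ^ 2 := by
      apply integral_eq_sub_of_hasDerivAt
      · intro s hs; exact hFder s (huIcc ▸ hs)
      · exact (hDFcont.mono (le_of_eq huIcc)).intervalIntegrable
    have hIDF : IntervalIntegrable DF volume (a + δ) b :=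
      (hDFcont.mono (le_of_eq huIcc)).intervalIntegrable
    -- endpoint values
    have hcb : c b = 0 := by
      simp only [hcdef]
      rw [show b - a = L from hLdef.symm, hkL]
      simp [Real.cos_pi_div_two]
    have hbdry : c (a + δ) * ‖u (a + δ)‖ ^ 2 ≤ π / 2 * K ^ 2 * δ := by
      have hkδ0 : 0 ≤ k * δ := mul_nonneg hk.le hδ.le
      have hkδπ : k * δ ≤ π / 2 := by nlinarith
      have hsinlb : 2 / π * (k * δ) ≤ Real.sin (k * δ) := Real.mul_le_sin hkδ0 hkδπ
      have hcosub : Real.cos (k * δ) ≤ 1 := Real.cos_le_one _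
      have hcos0 : 0 ≤ Real.cos (k * δ) := Real.cos_nonneg_of_mem_Icc
        ⟨by linarith [hkδ0, Real.pi_pos], hkδπ⟩
      have hπsin : π * Real.sin (k * δ) ≥ 2 * (k * δ) := by
        have heq : π * (2 / π * (k * δ)) = 2 * (k * δ) := by
          field_simp
        nlinarith [Real.pi_pos]
      have hsd : 0 < Real.sin (k * δ) := by
        have : 0 < 2 / π * (k * δ) :=
          mul_pos (by positivity) (mul_pos hk hδ)
        linarith
      have hcle : c (a + δ) ≤ π / (2 * δ) := by
        simp only [hcdef, add_sub_cancel_left]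
        rw [mul_div_assoc', div_le_div_iff₀ hsd (by linarith : (0:ℝ) < 2 * δ)]
        have hstep : k * Real.cos (k * δ) ≤ k := by nlinarith
        nlinarith [hπsin, hδ, hstep]
      have hcpos : 0 ≤ c (a + δ) := by
        simp only [hcdef, add_sub_cancel_left]
        exact mul_nonneg hk.le (div_nonneg hcos0 hsd.le)
      have husq : ‖u (a + δ)‖ ^ 2 ≤ K ^ 2 * δ ^ 2 := by
        have := hub (a + δ) ⟨by linarith, hone⟩
        rw [add_sub_cancel_left] at this
        calc ‖u (a + δ)‖ ^ 2 ≤ (K * δ) ^ 2 := pow_le_pow_left₀ (norm_nonneg _) this 2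
          _ = K ^ 2 * δ ^ 2 := by ring
      have h2δ : (0:ℝ) < 2 * δ := by linarith
      calc c (a + δ) * ‖u (a + δ)‖ ^ 2 ≤ (π / (2 * δ)) * (K ^ 2 * δ ^ 2) := by
            apply mul_le_mul hcle husq (by positivity)
              (div_nonneg Real.pi_pos.le (by linarith))
        _ = π / 2 * K ^ 2 * δ := by field_simp [hδ.ne']
    -- pointwise identity
    have hptwise : ∀ s ∈ Set.Icc (a + δ) b,
        ‖u' s - c s • u s‖ ^ 2 = ‖u' s‖ ^ 2 - DF s - k ^ 2 * ‖u s‖ ^ 2 := by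
      intro s hs
      have h1 := hsin s hs
      have h2 := Real.sin_sq_add_cos_sq (k * (s - a))
      have hcc : c' s = -(k ^ 2) - (c s) ^ 2 := by
        simp only [hcdef, hc'def]
        field_simp
        linear_combination h2
      rw [norm_sub_sq_real, real_inner_smul_right, norm_smul, hDFdef]
      simp only [Real.norm_eq_abs, mul_pow, sq_abs]
      rw [hcc, real_inner_comm (u s) (u' s)]
      ring
    -- integrate
    have hintid : ∫ s in (a + δ)..b, ‖u' s - c s • u s‖ ^ 2
        = (∫ s in (a + δ)..b, ‖u' s‖ ^ 2) - (∫ s in (a + δ)..b, DF s)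
          - k ^ 2 * ∫ s in (a + δ)..b, ‖u s‖ ^ 2 := by
      rw [← intervalIntegral.integral_const_mul, ← integral_sub (hIu' _ _) hIDF,
        ← integral_sub (((hIu' _ _).sub hIDF)) (((hIu _ _).const_mul _))]
      apply integral_congr
      intro s hs
      exact hptwise s (huIcc ▸ hs)
    have hpos : 0 ≤ ∫ s in (a + δ)..b, ‖u' s - c s • u s‖ ^ 2 :=
      integral_nonneg hone (fun s _ => by positivity)
    -- main inequality on [a+δ, b]
    have hmain : k ^ 2 * (∫ s in (a + δ)..b, ‖u s‖ ^ 2)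
        ≤ (∫ s in (a + δ)..b, ‖u' s‖ ^ 2) + π / 2 * K ^ 2 * δ := by
      rw [hintid, hFTC, hcb] at hpos
      simp only [zero_mul, zero_sub, sub_neg_eq_add] at hpos
      linarith
    -- splice the intervals
    have hsplit_u : (∫ s in a..(a + δ), ‖u s‖ ^ 2) + (∫ s in (a + δ)..b, ‖u s‖ ^ 2)
        = ∫ s in a..b, ‖u s‖ ^ 2 := integral_add_adjacent_intervals (hIu _ _) (hIu _ _)
    have hsplit_u' : (∫ s in a..(a + δ), ‖u' s‖ ^ 2) + (∫ s in (a + δ)..b, ‖u' s‖ ^ 2)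
        = ∫ s in a..b, ‖u' s‖ ^ 2 := integral_add_adjacent_intervals (hIu' _ _) (hIu' _ _)
    have hsmall : ∫ s in a..(a + δ), ‖u s‖ ^ 2 ≤ δ * Ku ^ 2 := by
      have : ∫ s in a..(a + δ), ‖u s‖ ^ 2 ≤ ∫ s in a..(a + δ), Ku ^ 2 := by
        apply integral_mono_on (by linarith) (hIu _ _) intervalIntegrable_const
        intro s hs
        have hsb : s ∈ Set.Icc a b := ⟨hs.1, le_trans hs.2 hone⟩
        have := hKu s hsb
        calc ‖u s‖ ^ 2 ≤ Ku ^ 2 := by nlinarith [norm_nonneg (u s)]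
          _ = Ku ^ 2 := rfl
      simpa using this
    have hnn : 0 ≤ ∫ s in a..(a + δ), ‖u' s‖ ^ 2 :=
      integral_nonneg (by linarith) (fun s _ => by positivity)
    nlinarith [hmain, hsplit_u, hsplit_u', hsmall, hnn, sq_nonneg k]
  -- pass to the limit δ → 0
  have hfin : k ^ 2 * ∫ s in a..b, ‖u s‖ ^ 2 ≤ ∫ s in a..b, ‖u' s‖ ^ 2 := by
    apply le_of_forall_pos_le_add
    intro ε hε
    set Co : ℝ := π / 2 * K ^ 2 + k ^ 2 * Ku ^ 2 with hCo
    have hCo0 : 0 ≤ Co := by positivity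
    set δ : ℝ := min L (ε / (Co + 1)) with hδdef
    have hδ0 : 0 < δ := lt_min hL (div_pos hε (by positivity))
    have hδL : δ ≤ L := min_le_left _ _
    have hδε : δ * Co ≤ ε := by
      have h1 : δ ≤ ε / (Co + 1) := min_le_right _ _
      calc δ * Co ≤ (ε / (Co + 1)) * Co := mul_le_mul_of_nonneg_right h1 hCo0
        _ ≤ ε := by rw [div_mul_eq_mul_div, div_le_iff₀ (by positivity)]; nlinarith
    linarith [key δ hδ0 hδL]
  have h4 : (2 * (b - a) / π) ^ 2 * k ^ 2 = 1 := by
    rw [show b - a = L from hLdef.symm, hkdef]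
    have hπ := Real.pi_ne_zero
    field_simp
  rw [hLdef]
  calc ∫ s in a..b, ‖u s‖ ^ 2
      = ((2 * (b - a) / π) ^ 2 * k ^ 2) * ∫ s in a..b, ‖u s‖ ^ 2 := by rw [h4, one_mul]
    _ = (2 * (b - a) / π) ^ 2 * (k ^ 2 * ∫ s in a..b, ‖u s‖ ^ 2) := by ring
    _ ≤ (2 * (b - a) / π) ^ 2 * ∫ s in a..b, ‖u' s‖ ^ 2 :=
        mul_le_mul_of_nonneg_left hfin (by positivity)


omit [CompleteSpace E] in
lemma wirtinger_right (u u' : ℝ → E) (hu : ∀ s, HasDerivAt u (u' s) s) (hcu' : Continuous u')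
    {a b : ℝ} (hab : a < b) (h0 : u b = 0) :
    ∫ s in a..b, ‖u s‖ ^ 2 ≤ (2 * (b - a) / π) ^ 2 * ∫ s in a..b, ‖u' s‖ ^ 2 := by
  have hcu : Continuous u := continuous_iff_continuousAt.2 fun s => (hu s).continuousAt
  set v : ℝ → E := fun s => u (a + b - s) with hvdef
  set v' : ℝ → E := fun s => -u' (a + b - s) with hv'def
  have hv : ∀ s, HasDerivAt v (v' s) s := by
    intro s
    have h1 : HasDerivAt (fun s : ℝ => a + b - s) (-1) s := by
      simpa using (hasDerivAt_id s).const_sub (a + b)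
    have := (hu (a + b - s)).scomp s h1
    simpa [hvdef, hv'def, Function.comp_def] using this
  have hva : v a = 0 := by simp [hvdef, show a + b - a = b by ring, h0]
  have hcv' : Continuous v' := by
    apply Continuous.neg
    exact hcu'.comp (by continuity)
  have H := wirtinger_left v v' hv hcv' hab hva
  have h1 : ∫ s in a..b, ‖v s‖ ^ 2 = ∫ s in a..b, ‖u s‖ ^ 2 := by
    have := intervalIntegral.integral_comp_sub_left (a := a) (b := b)
      (fun s => ‖u s‖ ^ 2) (a + b)
    simpa [show a + b - b = a by ring, show a + b - a = b by ring] using this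
  have h2 : ∫ s in a..b, ‖v' s‖ ^ 2 = ∫ s in a..b, ‖u' s‖ ^ 2 := by
    have := intervalIntegral.integral_comp_sub_left (a := a) (b := b)
      (fun s => ‖u' s‖ ^ 2) (a + b)
    simpa [hv'def, show a + b - b = a by ring, show a + b - a = b by ring] using this
  rw [h1, h2] at H
  exact H

lemma poincare (u u' : ℝ → E) (hu : ∀ s, HasDerivAt u (u' s) s) (hcu' : Continuous u')
    {a b : ℝ} (hab : a < b) (h0 : u a = 0) (h1 : u b = 0) :
    ∫ s in a..b, ‖u s‖ ^ 2 ≤ ((b - a) / π) ^ 2 * ∫ s in a..b, ‖u' s‖ ^ 2 := by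
  have hcu : Continuous u := continuous_iff_continuousAt.2 fun s => (hu s).continuousAt
  set m : ℝ := (a + b) / 2 with hmdef
  have ham : a < m := by rw [hmdef]; linarith
  have hmb : m < b := by rw [hmdef]; linarith
  have hL := wirtinger_left u u' hu hcu' ham h0
  have hR := wirtinger_right u u' hu hcu' hmb h1
  have hIu : ∀ a' b' : ℝ, IntervalIntegrable (fun s => ‖u s‖ ^ 2) volume a' b' :=
    fun a' b' => ((hcu.norm.pow 2)).intervalIntegrable a' b'
  have hIu' : ∀ a' b' : ℝ, IntervalIntegrable (fun s => ‖u' s‖ ^ 2) volume a' b' :=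
    fun a' b' => ((hcu'.norm.pow 2)).intervalIntegrable a' b'
  have hsu : (∫ s in a..m, ‖u s‖ ^ 2) + (∫ s in m..b, ‖u s‖ ^ 2) = ∫ s in a..b, ‖u s‖ ^ 2 :=
    integral_add_adjacent_intervals (hIu _ _) (hIu _ _)
  have hsu' : (∫ s in a..m, ‖u' s‖ ^ 2) + (∫ s in m..b, ‖u' s‖ ^ 2) = ∫ s in a..b, ‖u' s‖ ^ 2 :=
    integral_add_adjacent_intervals (hIu' _ _) (hIu' _ _)
  have e1 : (2 * (m - a) / π) ^ 2 = ((b - a) / π) ^ 2 := by rw [hmdef]; ring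
  have e2 : (2 * (b - m) / π) ^ 2 = ((b - a) / π) ^ 2 := by rw [hmdef]; ring
  rw [e1] at hL
  rw [e2] at hR
  nlinarith [hL, hR, hsu, hsu']

end helpers

/-- Under the Assumption, with
`M = sup |∂ₓ²V|` and `0 < T < π/√M` (encoded as `T·√M < π`), there is `C₂ > 0` such that
whenever `(x⁽¹⁾, ξ⁽¹⁾)` solves the Hamiltonian system with `x⁽¹⁾(0) = y`, `x⁽¹⁾(t) = x`
and `(x⁽²⁾, ξ⁽²⁾)` solves it with `x⁽²⁾(t) = x′`, `ξ⁽²⁾(t) = ξ`, then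
`|ξ⁽¹⁾(s) − ξ⁽²⁾(s) − ((x − x′) − (y − x⁽²⁾(0)))/t| ≤ C₂ t (|x − x′| + |y − x⁽²⁾(0)|)`
for all `0 ≤ s ≤ t < T`. -/
theorem stmt_6 (n : ℕ) (V : ℝ → EuclideanSpace ℝ (Fin n) → ℝ) (hV : PotAssumption n V)
    (M : ℝ)
    (hM : M = ⨆ p : ℝ × EuclideanSpace ℝ (Fin n), ‖iteratedFDeriv ℝ 2 (V p.1) p.2‖)
    (T : ℝ) (hT : 0 < T) (hTM : T * Real.sqrt M < π) :
    ∃ C₂ > 0, ∀ t ∈ Set.Ioo (0 : ℝ) T, ∀ x y x' ξ : EuclideanSpace ℝ (Fin n),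
      ∀ x1 ξ1 x2 ξ2 : ℝ → EuclideanSpace ℝ (Fin n),
        (∀ s, HasDerivAt x1 (ξ1 s) s ∧ HasDerivAt ξ1 (-(gradient (V s) (x1 s))) s) →
        x1 0 = y → x1 t = x →
        (∀ s, HasDerivAt x2 (ξ2 s) s ∧ HasDerivAt ξ2 (-(gradient (V s) (x2 s))) s) →
        x2 t = x' → ξ2 t = ξ →
        ∀ s ∈ Set.Icc (0 : ℝ) t,
          ‖ξ1 s - ξ2 s - t⁻¹ • ((x - x') - (y - x2 0))‖
            ≤ C₂ * t * (‖x - x'‖ + ‖y - x2 0‖) := by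
  obtain ⟨C, hCpos, hC⟩ := hV.2.2.2.2
  have hπ := Real.pi_pos
  have hbdd : BddAbove (Set.range fun p : ℝ × EuclideanSpace ℝ (Fin n) =>
      ‖iteratedFDeriv ℝ 2 (V p.1) p.2‖) := ⟨C, by rintro z ⟨p, rfl⟩; exact hC p.1 p.2⟩
  have hMb : ∀ s xx, ‖iteratedFDeriv ℝ 2 (V s) xx‖ ≤ M := by
    intro s xx; rw [hM]; exact le_ciSup hbdd (s, xx)
  have hM0 : 0 ≤ M := le_trans (norm_nonneg _) (hMb 0 0)
  have hMT : M * T ^ 2 < π ^ 2 := by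
    have h1 : (T * Real.sqrt M) ^ 2 < π ^ 2 :=
      pow_lt_pow_left₀ hTM (mul_nonneg hT.le (Real.sqrt_nonneg M)) (by norm_num)
    rw [mul_pow, Real.sq_sqrt hM0] at h1
    exact lt_of_le_of_lt (le_of_eq (mul_comm M (T ^ 2))) h1
  have hlip : ∀ s (aa bb : EuclideanSpace ℝ (Fin n)),
      ‖gradient (V s) aa - gradient (V s) bb‖ ≤ M * ‖aa - bb‖ :=
    fun s aa bb => grad_lip (hV.1 s) (hMb s) aa bb
  -- global constants
  set γ : ℝ := (π ^ 2 - M * T ^ 2) / (2 * T ^ 2) with hγdef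
  have hγ0 : 0 < γ := div_pos (by linarith) (by positivity)
  set ρ : ℝ := (3 * (M * T ^ 2) + π ^ 2) / (4 * π ^ 2) with hρdef
  have hρ1 : 0 < 1 - ρ := by
    rw [hρdef, sub_pos, div_lt_one (by positivity)]
    linarith only [hMT]
  have hρ0 : 0 ≤ ρ := by
    rw [hρdef]
    apply div_nonneg _ (by positivity)
    have h9 : 0 ≤ M * T ^ 2 := mul_nonneg hM0 (sq_nonneg T)
    have h8 : 0 ≤ π ^ 2 := sq_nonneg π
    linarith only [h9, h8]
  have hMγρ : (M + γ / 2) * T ^ 2 = ρ * π ^ 2 := by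
    rw [hγdef, hρdef]; field_simp; ring
  have hMγ0 : 0 ≤ M + γ / 2 := by linarith
  clear_value γ ρ
  set KQ : ℝ := (T / π) ^ 2 * (M ^ 2 / (2 * γ * (1 - ρ))) with hKQdef
  have hKQ0 : 0 ≤ KQ :=
    mul_nonneg (by positivity) (div_nonneg (sq_nonneg M)
      (le_of_lt (mul_pos (by linarith) hρ1)))
  have hKQeq2 : KQ * (1 - ρ) = (T / π) ^ 2 * (M ^ 2 / (2 * γ)) := by
    rw [hKQdef]; field_simp
  set KP : ℝ := (M + γ / 2) * KQ + M ^ 2 / (2 * γ) with hKPdef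
  have hKP0 : 0 ≤ KP :=
    add_nonneg (mul_nonneg hMγ0 hKQ0) (div_nonneg (sq_nonneg M) (by linarith))
  set KV : ℝ := π * KQ + T ^ 2 / π * KP with hKVdef
  have hKV0 : 0 ≤ KV :=
    add_nonneg (mul_nonneg hπ.le hKQ0) (mul_nonneg (by positivity) hKP0)
  set KW : ℝ := 2 * (Real.sqrt KV + 1) with hKWdef
  have hKW0 : 0 < KW := by
    have := Real.sqrt_nonneg KV
    rw [hKWdef]; linarith
  clear_value KQ KP KV KW
  refine ⟨M * KW + 1, by linarith only [mul_nonneg hM0 hKW0.le], ?_⟩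
  rintro t ⟨ht0, htT⟩ x y x' ξ x1 ξ1 x2 ξ2 hH1 hx10 hx1t hH2 hx2t hξ2t s hs
  have htne : (t : ℝ) ≠ 0 := ne_of_gt ht0
  -- main objects
  set w : ℝ → EuclideanSpace ℝ (Fin n) := fun r => x1 r - x2 r with hwdef
  set wd : ℝ → EuclideanSpace ℝ (Fin n) := fun r => ξ1 r - ξ2 r with hwddef
  have hw : ∀ r, HasDerivAt w (wd r) r := fun r => ((hH1 r).1).sub ((hH2 r).1)
  set f : ℝ → EuclideanSpace ℝ (Fin n) :=
    fun r => gradient (V r) (x2 r) - gradient (V r) (x1 r) with hfdef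
  have hwd : ∀ r, HasDerivAt wd (f r) r := by
    intro r
    have h := ((hH1 r).2).sub ((hH2 r).2)
    refine h.congr_deriv ?_
    simp [hfdef]
    abel
  set B : ℝ := ‖w t‖ + ‖w 0‖ with hBdef
  have hB0 : 0 ≤ B := add_nonneg (norm_nonneg _) (norm_nonneg _)
  set D : ℝ := 2 * B with hDdef
  have hD0 : 0 ≤ D := by rw [hDdef]; linarith
  set l : ℝ → EuclideanSpace ℝ (Fin n) := fun r => w 0 + (r / t) • (w t - w 0) with hldef
  have hlder : ∀ r, HasDerivAt l (t⁻¹ • (w t - w 0)) r := by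
    intro r
    have h1 : HasDerivAt (fun r : ℝ => r / t) (1 / t) r := (hasDerivAt_id r).div_const t
    have := (h1.smul_const (w t - w 0)).const_add (w 0)
    simpa [one_div, hldef] using this
  set v : ℝ → EuclideanSpace ℝ (Fin n) := fun r => w r - l r with hvdef
  set vd : ℝ → EuclideanSpace ℝ (Fin n) := fun r => wd r - t⁻¹ • (w t - w 0) with hvddef
  have hv : ∀ r, HasDerivAt v (vd r) r := fun r => (hw r).sub (hlder r)
  have hvd : ∀ r, HasDerivAt vd (f r) r := by
    intro r; simpa [hvddef] using (hwd r).sub_const (t⁻¹ • (w t - w 0))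
  have hv0 : v 0 = 0 := by simp [hvdef, hldef]
  have hvt : v t = 0 := by
    simp [hvdef, hldef, div_self htne]
  -- continuity
  have hcx1 : Continuous x1 := continuous_iff_continuousAt.2 fun r => ((hH1 r).1).continuousAt
  have hcx2 : Continuous x2 := continuous_iff_continuousAt.2 fun r => ((hH2 r).1).continuousAt
  have hcξ1 : Continuous ξ1 := continuous_iff_continuousAt.2 fun r => ((hH1 r).2).continuousAt
  have hcξ2 : Continuous ξ2 := continuous_iff_continuousAt.2 fun r => ((hH2 r).2).continuousAt
  have hcw : Continuous w := hcx1.sub hcx2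
  have hcwd : Continuous wd := hcξ1.sub hcξ2
  have hcgrad : ∀ z : ℝ → EuclideanSpace ℝ (Fin n), Continuous z →
      Continuous fun r => gradient (V r) (z r) := by
    intro z hz
    have h1 := (hV.2.2.1).comp (continuous_id.prodMk hz)
    exact ((InnerProductSpace.toDual ℝ (EuclideanSpace ℝ (Fin n))).symm.continuous).comp h1
  have hcf : Continuous f := (hcgrad x2 hcx2).sub (hcgrad x1 hcx1)
  have hcl : Continuous l :=
    continuous_const.add ((continuous_id.div_const t).smul continuous_const)
  have hcv : Continuous v := hcw.sub hcl
  have hcvd : Continuous vd := hcwd.sub continuous_const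
  -- bounds
  have hfb : ∀ r, ‖f r‖ ≤ M * ‖w r‖ := by
    intro r
    have h := hlip r (x2 r) (x1 r)
    rw [norm_sub_rev (x2 r) (x1 r)] at h
    simpa [hfdef, hwdef] using h
  have hlb : ∀ r ∈ Set.Icc (0 : ℝ) t, ‖l r‖ ≤ D := by
    intro r hr
    have h1 : ‖(r / t) • (w t - w 0)‖ ≤ ‖w t - w 0‖ := by
      rw [norm_smul, Real.norm_eq_abs, abs_of_nonneg (div_nonneg hr.1 ht0.le)]
      have h2 : r / t ≤ 1 := (div_le_one ht0).2 hr.2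
      exact mul_le_of_le_one_left (norm_nonneg _) h2
    calc ‖l r‖ ≤ ‖w 0‖ + ‖(r / t) • (w t - w 0)‖ := norm_add_le _ _
      _ ≤ ‖w 0‖ + ‖w t - w 0‖ := by linarith only [h1]
      _ ≤ ‖w 0‖ + (‖w t‖ + ‖w 0‖) := by linarith only [norm_sub_le (w t) (w 0)]
      _ ≤ D := by rw [hDdef, hBdef]; linarith only [norm_nonneg (w t)]
  -- energy identity
  have hEid : ∫ r in (0:ℝ)..t, (⟪v r, f r⟫ + ‖vd r‖ ^ 2) = 0 := by
    have hder : ∀ r ∈ Set.uIcc (0:ℝ) t,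
        HasDerivAt (fun r => ⟪v r, vd r⟫) (⟪v r, f r⟫ + ‖vd r‖ ^ 2) r := by
      intro r _
      have h := (hv r).inner ℝ (hvd r)
      rw [← real_inner_self_eq_norm_sq]
      exact h
    rw [integral_eq_sub_of_hasDerivAt hder
      (((hcv.inner hcf).add (hcvd.norm.pow 2)).intervalIntegrable _ _)]
    simp [hv0, hvt]
  set Q : ℝ := ∫ r in (0:ℝ)..t, ‖v r‖ ^ 2 with hQdef
  set P : ℝ := ∫ r in (0:ℝ)..t, ‖vd r‖ ^ 2 with hPdef
  have hQ0 : 0 ≤ Q := integral_nonneg ht0.le fun _ _ => by positivity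
  have hP0 : 0 ≤ P := integral_nonneg ht0.le fun _ _ => by positivity
  have hPeq : P = -∫ r in (0:ℝ)..t, ⟪v r, f r⟫ := by
    have hsplit := intervalIntegral.integral_add
      ((hcv.inner hcf).intervalIntegrable (μ := volume) (0:ℝ) t)
      ((hcvd.norm.pow 2).intervalIntegrable (μ := volume) (0:ℝ) t)
    simp only [Pi.pow_apply] at hsplit
    rw [hEid, ← hPdef] at hsplit
    linarith only [hsplit]
  -- step 1 : energy bound
  have hAMg : ∀ a b : ℝ, M * a * b ≤ γ / 2 * a ^ 2 + M ^ 2 * b ^ 2 / (2 * γ) := by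
    intro a b
    have h : (0:ℝ) ≤ (γ * a - M * b) ^ 2 := sq_nonneg _
    have h2 : γ / 2 * a ^ 2 + M ^ 2 * b ^ 2 / (2 * γ) - M * a * b
        = (γ * a - M * b) ^ 2 / (2 * γ) := by
      field_simp [hγ0.ne']
      ring
    have h3 : 0 ≤ (γ * a - M * b) ^ 2 / (2 * γ) := div_nonneg h (by linarith only [hγ0])
    linarith only [h2, h3]
  have hP1 : P ≤ (M + γ / 2) * Q + M ^ 2 * D ^ 2 / (2 * γ) * t := by
    have hmono : (∫ r in (0:ℝ)..t, -⟪v r, f r⟫)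
        ≤ ∫ r in (0:ℝ)..t, ((M + γ / 2) * ‖v r‖ ^ 2 + M ^ 2 * D ^ 2 / (2 * γ)) := by
      apply integral_mono_on ht0.le ((hcv.inner hcf).neg.intervalIntegrable 0 t)
        (((continuous_const.mul (hcv.norm.pow 2)).add continuous_const).intervalIntegrable 0 t)
      intro r hr
      simp only [Pi.add_apply, Pi.mul_apply, Pi.pow_apply, Pi.neg_apply]
      have h1 : -⟪v r, f r⟫ ≤ ‖v r‖ * ‖f r‖ := by
        have h := abs_real_inner_le_norm (v r) (f r)
        have h' := neg_abs_le ⟪v r, f r⟫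
        linarith only [h, h']
      have h4 : ‖w r‖ ≤ ‖v r‖ + D := by
        have hwr : w r = v r + l r := by simp [hvdef]
        calc ‖w r‖ = ‖v r + l r‖ := by rw [hwr]
          _ ≤ ‖v r‖ + ‖l r‖ := norm_add_le _ _
          _ ≤ _ := by linarith only [hlb r hr]
      have h2 : ‖f r‖ ≤ M * (‖v r‖ + D) :=
        le_trans (hfb r) (mul_le_mul_of_nonneg_left h4 hM0)
      have h5 : ‖v r‖ * ‖f r‖ ≤ M * ‖v r‖ ^ 2 + M * ‖v r‖ * D := by
        have h5a := mul_le_mul_of_nonneg_left h2 (norm_nonneg (v r))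
        calc ‖v r‖ * ‖f r‖ ≤ ‖v r‖ * (M * (‖v r‖ + D)) := h5a
          _ = M * ‖v r‖ ^ 2 + M * ‖v r‖ * D := by ring
      have h6 := hAMg (‖v r‖) D
      linarith only [h1, h5, h6]
    rw [intervalIntegral.integral_add (f := fun r => (M + γ / 2) * ‖v r‖ ^ 2) ((continuous_const.mul (hcv.norm.pow 2)).intervalIntegrable 0 t)
      intervalIntegrable_const, intervalIntegral.integral_const_mul,
      intervalIntegral.integral_const] at hmono
    rw [hPeq, ← intervalIntegral.integral_neg]
    simp only [smul_eq_mul, sub_zero] at hmono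
    rw [← hQdef] at hmono
    linarith only [hmono]
  -- step 2 : Poincaré
  have hPoin : Q ≤ (t / π) ^ 2 * P := by
    have h := poincare v vd hv hcvd ht0 hv0 hvt
    simpa using h
  -- step 3 : bound on Q
  have ht2T2 : t ^ 2 ≤ T ^ 2 := pow_le_pow_left₀ ht0.le htT.le 2
  have hρt : t ^ 2 * (M + γ / 2) ≤ ρ * π ^ 2 := by
    have h := mul_le_mul_of_nonneg_left ht2T2 hMγ0
    linarith only [h, hMγρ]
  have hρt' : (t / π) ^ 2 * (M + γ / 2) ≤ ρ := by
    rw [div_pow, div_mul_eq_mul_div, div_le_iff₀ (by positivity)]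
    linarith only [hρt]
  have htT2 : (t / π) ^ 2 ≤ (T / π) ^ 2 := by
    rw [div_pow, div_pow]
    gcongr
  have hQb : Q ≤ KQ * (t * D ^ 2) := by
    have hcst : (0:ℝ) ≤ M ^ 2 * D ^ 2 / (2 * γ) * t :=
      mul_nonneg (div_nonneg (by positivity) (by linarith)) ht0.le
    have h1 : Q ≤ (t / π) ^ 2 * (M + γ / 2) * Q + (t / π) ^ 2 * (M ^ 2 * D ^ 2 / (2 * γ) * t) := by
      have h := mul_le_mul_of_nonneg_left hP1 (sq_nonneg (t / π))
      calc Q ≤ (t / π) ^ 2 * P := hPoin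
        _ ≤ (t / π) ^ 2 * ((M + γ / 2) * Q + M ^ 2 * D ^ 2 / (2 * γ) * t) := h
        _ = (t / π) ^ 2 * (M + γ / 2) * Q + (t / π) ^ 2 * (M ^ 2 * D ^ 2 / (2 * γ) * t) := by ring
    have h2 : (1 - ρ) * Q ≤ (T / π) ^ 2 * (M ^ 2 * D ^ 2 / (2 * γ) * t) := by
      have ha := mul_le_mul_of_nonneg_right hρt' hQ0
      have hb := mul_le_mul_of_nonneg_right htT2 hcst
      linarith only [h1, ha, hb]
    have h3 : (1 - ρ) * (KQ * (t * D ^ 2)) = (T / π) ^ 2 * (M ^ 2 * D ^ 2 / (2 * γ) * t) := by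
      linear_combination (t * D ^ 2) * hKQeq2
    have h4 : (1 - ρ) * Q ≤ (1 - ρ) * (KQ * (t * D ^ 2)) := by linarith only [h2, h3]
    exact le_of_mul_le_mul_left h4 hρ1
  -- step 4 : bound on P
  have hPb : P ≤ KP * (t * D ^ 2) := by
    have h1 := mul_le_mul_of_nonneg_left hQb hMγ0
    have heq : KP * (t * D ^ 2)
        = (M + γ / 2) * (KQ * (t * D ^ 2)) + M ^ 2 * D ^ 2 / (2 * γ) * t := by
      rw [hKPdef]
      ring
    linarith only [hP1, h1, heq]
    -- step 5 : sup bound on v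
  have hAM2 : ∀ a b : ℝ, 2 * (a * b) ≤ π / t * a ^ 2 + t / π * b ^ 2 := by
    intro a b
    have h : (0:ℝ) ≤ (π * a - t * b) ^ 2 := sq_nonneg _
    have h2 : π / t * a ^ 2 + t / π * b ^ 2 - 2 * (a * b) = (π * a - t * b) ^ 2 / (t * π) := by
      field_simp
      ring
    have h3 : 0 ≤ (π * a - t * b) ^ 2 / (t * π) := div_nonneg h (mul_pos ht0 hπ).le
    linarith only [h2, h3]
  have hInt1 : ∀ a' b' : ℝ, IntervalIntegrable
      (fun q => π / t * ‖v q‖ ^ 2 + t / π * ‖vd q‖ ^ 2) volume a' b' :=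
    fun a' b' => ((continuous_const.mul (hcv.norm.pow 2)).add
      (continuous_const.mul (hcvd.norm.pow 2))).intervalIntegrable a' b'
  have hvsup : ∀ r ∈ Set.Icc (0:ℝ) t, ‖v r‖ ^ 2 ≤ KV * D ^ 2 := by
    intro r hr
    have hFTC2 : ∫ q in (0:ℝ)..r, 2 * ⟪v q, vd q⟫ = ‖v r‖ ^ 2 - ‖v 0‖ ^ 2 :=
      integral_eq_sub_of_hasDerivAt (fun q _ => (hv q).norm_sq)
        ((continuous_const.mul (hcv.inner hcvd)).intervalIntegrable _ _)
    have hb1 : ∫ q in (0:ℝ)..r, 2 * ⟪v q, vd q⟫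
        ≤ ∫ q in (0:ℝ)..r, (π / t * ‖v q‖ ^ 2 + t / π * ‖vd q‖ ^ 2) := by
      apply integral_mono_on hr.1
        ((continuous_const.mul (hcv.inner hcvd)).intervalIntegrable _ _) (hInt1 _ _)
      intro q _
      simp only [Pi.add_apply, Pi.mul_apply, Pi.pow_apply]
      have ham := hAM2 (‖v q‖) (‖vd q‖)
      have hinq := real_inner_le_norm (v q) (vd q)
      linarith only [ham, hinq]
    have hb2 : ∫ q in (0:ℝ)..r, (π / t * ‖v q‖ ^ 2 + t / π * ‖vd q‖ ^ 2)
        ≤ ∫ q in (0:ℝ)..t, (π / t * ‖v q‖ ^ 2 + t / π * ‖vd q‖ ^ 2) := by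
      have hadj := integral_add_adjacent_intervals (a := (0:ℝ)) (b := r) (c := t)
        (hInt1 _ _) (hInt1 _ _)
      have hnn : 0 ≤ ∫ q in r..t, (π / t * ‖v q‖ ^ 2 + t / π * ‖vd q‖ ^ 2) :=
        integral_nonneg hr.2 (fun q _ => add_nonneg
          (mul_nonneg (div_nonneg hπ.le ht0.le) (sq_nonneg _))
          (mul_nonneg (div_nonneg ht0.le hπ.le) (sq_nonneg _)))
      linarith only [hadj, hnn]
    have hb3 : ∫ q in (0:ℝ)..t, (π / t * ‖v q‖ ^ 2 + t / π * ‖vd q‖ ^ 2)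
        = π / t * Q + t / π * P := by
      rw [intervalIntegral.integral_add (f := fun q => π / t * ‖v q‖ ^ 2) (g := fun q => t / π * ‖vd q‖ ^ 2)
        ((continuous_const.mul (hcv.norm.pow 2)).intervalIntegrable _ _)
        ((continuous_const.mul (hcvd.norm.pow 2)).intervalIntegrable _ _),
        intervalIntegral.integral_const_mul, intervalIntegral.integral_const_mul,
        ← hQdef, ← hPdef]
    have h4 : ‖v r‖ ^ 2 ≤ π / t * Q + t / π * P := by
      rw [hv0] at hFTC2
      simp only [norm_zero] at hFTC2
      have hz : (0:ℝ) ^ 2 = 0 := by norm_num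
      rw [hz, sub_zero] at hFTC2
      linarith only [hFTC2, hb1, hb2, hb3]
    have h5 : π / t * Q ≤ π * KQ * D ^ 2 := by
      have h5a := mul_le_mul_of_nonneg_left hQb (le_of_lt (div_pos hπ ht0))
      have h5b : π / t * (KQ * (t * D ^ 2)) = π * KQ * D ^ 2 := by
        field_simp
      linarith only [h5a, h5b]
    have h6 : t / π * P ≤ T ^ 2 / π * KP * D ^ 2 := by
      have h6a := mul_le_mul_of_nonneg_left hPb (le_of_lt (div_pos ht0 hπ))
      have h6b : t / π * (KP * (t * D ^ 2)) = t ^ 2 * (KP * D ^ 2 / π) := by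
        ring
      have h6c : t ^ 2 * (KP * D ^ 2 / π) ≤ T ^ 2 * (KP * D ^ 2 / π) :=
        mul_le_mul_of_nonneg_right ht2T2
          (div_nonneg (mul_nonneg hKP0 (sq_nonneg D)) hπ.le)
      have h6d : T ^ 2 / π * KP * D ^ 2 = T ^ 2 * (KP * D ^ 2 / π) := by ring
      linarith only [h6a, h6b, h6c, h6d]
    have heq : KV * D ^ 2 = π * KQ * D ^ 2 + T ^ 2 / π * KP * D ^ 2 := by
      rw [hKVdef]; ring
    linarith only [h4, h5, h6, heq]
  -- sup bound on w
  have hwsup : ∀ r ∈ Set.Icc (0:ℝ) t, ‖w r‖ ≤ KW * B := by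
    intro r hr
    have h1 : ‖v r‖ ≤ Real.sqrt KV * D := by
      have h2 := hvsup r hr
      have h3 : ‖v r‖ = Real.sqrt (‖v r‖ ^ 2) := (Real.sqrt_sq (norm_nonneg _)).symm
      rw [h3]
      calc Real.sqrt (‖v r‖ ^ 2) ≤ Real.sqrt (KV * D ^ 2) := Real.sqrt_le_sqrt h2
        _ = Real.sqrt KV * D := by rw [Real.sqrt_mul hKV0, Real.sqrt_sq hD0]
    have h4 : w r = v r + l r := by simp [hvdef]
    calc ‖w r‖ = ‖v r + l r‖ := by rw [h4]
      _ ≤ ‖v r‖ + ‖l r‖ := norm_add_le _ _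
      _ ≤ Real.sqrt KV * D + D := by linarith only [h1, hlb r hr]
      _ = KW * B := by rw [hKWdef, hDdef]; ring
  have hWB0 : 0 ≤ KW * B := mul_nonneg hKW0.le hB0
  have hfb2 : ∀ r ∈ Set.Icc (0:ℝ) t, ‖f r‖ ≤ M * (KW * B) := fun r hr =>
    le_trans (hfb r) (mul_le_mul_of_nonneg_left (hwsup r hr) hM0)
  -- difference bound for vd
  have hvdiff : ∀ r₁ ∈ Set.Icc (0:ℝ) t, ∀ r₂ ∈ Set.Icc (0:ℝ) t,
      ‖vd r₁ - vd r₂‖ ≤ M * (KW * B) * t := by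
    intro r₁ h₁ r₂ h₂
    have hFTC3 : ∫ q in r₂..r₁, f q = vd r₁ - vd r₂ :=
      integral_eq_sub_of_hasDerivAt (fun q _ => hvd q) (hcf.intervalIntegrable _ _)
    rw [← hFTC3]
    have habs : |r₁ - r₂| ≤ t := by
      rw [abs_le]
      constructor
      · linarith only [h₁.1, h₂.2]
      · linarith only [h₁.2, h₂.1]
    calc ‖∫ q in r₂..r₁, f q‖ ≤ M * (KW * B) * |r₁ - r₂| := by
          apply intervalIntegral.norm_integral_le_of_norm_le_const
          intro q hq
          apply hfb2
          have hq1 : min r₂ r₁ < q := hq.1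
          have hq2 : q ≤ max r₂ r₁ := hq.2
          have hmn : (0:ℝ) ≤ min r₂ r₁ := le_min h₂.1 h₁.1
          have hmx : max r₂ r₁ ≤ t := max_le h₂.2 h₁.2
          exact ⟨by linarith only [hmn, hq1], by linarith only [hmx, hq2]⟩
      _ ≤ M * (KW * B) * t :=
          mul_le_mul_of_nonneg_left habs (mul_nonneg hM0 hWB0)
  -- average of vd is the slope
  have hvdzero : ∫ q in (0:ℝ)..t, vd q = 0 := by
    rw [integral_eq_sub_of_hasDerivAt (fun q _ => hv q) (hcvd.intervalIntegrable _ _),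
      hvt, hv0, sub_zero]
  have hkey : t • vd s = ∫ q in (0:ℝ)..t, (vd s - vd q) := by
    rw [intervalIntegral.integral_sub intervalIntegrable_const
      (hcvd.intervalIntegrable _ _), hvdzero, sub_zero, intervalIntegral.integral_const,
      sub_zero]
  have hnorm : ‖t • vd s‖ ≤ M * (KW * B) * t * |t - 0| := by
    rw [hkey]
    apply intervalIntegral.norm_integral_le_of_norm_le_const
    intro q hq
    rw [Set.uIoc_of_le ht0.le] at hq
    exact hvdiff s hs q ⟨hq.1.le, hq.2⟩
  have hfinal : ‖vd s‖ ≤ M * (KW * B) * t := by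
    rw [norm_smul, Real.norm_eq_abs, abs_of_pos ht0, sub_zero, abs_of_pos ht0] at hnorm
    have he : M * (KW * B) * t * t = t * (M * (KW * B) * t) := by ring
    rw [he] at hnorm
    exact le_of_mul_le_mul_left hnorm ht0
  -- conclusion
  have hgoal : ξ1 s - ξ2 s - t⁻¹ • ((x - x') - (y - x2 0)) = vd s := by
    rw [← hx1t, ← hx2t, ← hx10]
  have hBeq : B = ‖x - x'‖ + ‖y - x2 0‖ := by
    rw [hBdef, ← hx1t, ← hx2t, ← hx10]
  rw [hgoal, ← hBeq]
  have he2 : M * (KW * B) * t = M * KW * (t * B) := by ring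
  have he3 : (M * KW + 1) * t * B = M * KW * (t * B) + t * B := by ring
  have htB : 0 ≤ t * B := mul_nonneg ht0.le hB0
  linarith only [hfinal, he2, he3, htB]
end

section
/- Let f ∈ 𝒮(ℝⁿ) and t > 0. Then for every x ∈ ℝⁿ, ℱ*( e^{−(1/2)it|ξ|²} ℱf )(x) = (2πit)^{−n/2} ∫_{ℝⁿ} e^{i|x−y|²/(2t)} f(y) dy, where (2πit)^{−n/2} uses the branch (2πit)^{n/2} = (2πt)^{n/2} e^{iπn/4}. -/
open MeasureTheory
open scoped Real

set_option maxHeartbeats 1000000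

namespace Stmt9Aux

open Complex Filter
open scoped Topology

variable {n : ℕ}

noncomputable def gg (f : SchwartzMap (EuclideanSpace ℝ (Fin n)) ℂ) :
    EuclideanSpace ℝ (Fin n) → ℂ :=
  fun ξ => ∫ y, f y * Complex.exp (-Complex.I * ((inner ℝ y ξ : ℝ) : ℂ))

lemma gg_eq (f : SchwartzMap (EuclideanSpace ℝ (Fin n)) ℂ) :
    gg f = fun ξ => FourierTransform.fourier (f : EuclideanSpace ℝ (Fin n) → ℂ) ((2*π)⁻¹ • ξ) := by
  funext ξ
  rw [gg]
  rw [Real.fourier_eq']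
  congr 1 with y
  rw [real_inner_smul_right, smul_eq_mul]
  have : (-2 * π * ((2*π)⁻¹ * (inner ℝ y ξ : ℝ)) : ℝ) = -(inner ℝ y ξ : ℝ) := by
    field_simp
  rw [this]
  push_cast
  ring

lemma gg_cont (f : SchwartzMap (EuclideanSpace ℝ (Fin n)) ℂ) : Continuous (gg f) := by
  rw [gg_eq]
  have := (SchwartzMap.fourierTransformCLM ℂ f).continuous.comp
    (continuous_const_smul ((2*π)⁻¹) : Continuous fun ξ : EuclideanSpace ℝ (Fin n) => (2*π)⁻¹ • ξ)
  simpa [Function.comp_def, SchwartzMap.fourierTransformCLM_apply, SchwartzMap.fourier_coe] using this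

lemma gg_int (f : SchwartzMap (EuclideanSpace ℝ (Fin n)) ℂ) : Integrable (gg f) := by
  rw [gg_eq]
  have h : Integrable (fun ξ : EuclideanSpace ℝ (Fin n) =>
      (SchwartzMap.fourierTransformCLM ℂ f) ((2*π)⁻¹ • ξ)) volume := by
    rw [integrable_comp_smul_iff volume _ (by positivity : ((2*π)⁻¹ : ℝ) ≠ 0)]
    exact (SchwartzMap.fourierTransformCLM ℂ f).integrable
  exact h.congr (Eventually.of_forall fun ξ => by
    rw [SchwartzMap.fourierTransformCLM_apply, SchwartzMap.fourier_coe])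

noncomputable def KK (f : SchwartzMap (EuclideanSpace ℝ (Fin n)) ℂ) (t : ℝ)
    (x : EuclideanSpace ℝ (Fin n)) (ε : ℝ) (ξ : EuclideanSpace ℝ (Fin n)) : ℂ :=
  Complex.exp (-((ε:ℂ) + Complex.I * t) * ((‖ξ‖^2 : ℝ) : ℂ) / 2) * gg f ξ *
    Complex.exp (Complex.I * ((inner ℝ x ξ : ℝ) : ℂ))

lemma re_aux (ε t r : ℝ) : (-((ε:ℂ) + Complex.I*t) * (r:ℂ) / 2).re = -ε * r / 2 := by
  have : -((ε:ℂ) + Complex.I*t) * (r:ℂ) / 2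
      = ((-ε * r/2 : ℝ) : ℂ) + ((-t*r/2 : ℝ) : ℂ) * Complex.I := by push_cast; ring
  rw [this]; simp

lemma norm_KK (f : SchwartzMap (EuclideanSpace ℝ (Fin n)) ℂ) (t : ℝ)
    (x : EuclideanSpace ℝ (Fin n)) (ε : ℝ) (hε : 0 ≤ ε) (ξ : EuclideanSpace ℝ (Fin n)) :
    ‖KK f t x ε ξ‖ ≤ ‖gg f ξ‖ := by
  rw [KK, norm_mul, norm_mul, Complex.norm_exp, Complex.norm_exp, re_aux]
  have h2 : (Complex.I * ((inner ℝ x ξ : ℝ) : ℂ)).re = 0 := by simp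
  rw [h2, Real.exp_zero, mul_one]
  have h1 : Real.exp (-ε * ‖ξ‖^2 / 2) ≤ 1 := by
    rw [Real.exp_le_one_iff]
    have : (0:ℝ) ≤ ε * ‖ξ‖^2 / 2 := by positivity
    linarith
  calc Real.exp (-ε * ‖ξ‖^2 / 2) * ‖gg f ξ‖ ≤ 1 * ‖gg f ξ‖ := by
        exact mul_le_mul_of_nonneg_right h1 (norm_nonneg _)
    _ = ‖gg f ξ‖ := one_mul _

lemma KK_cont (f : SchwartzMap (EuclideanSpace ℝ (Fin n)) ℂ) (t : ℝ)
    (x : EuclideanSpace ℝ (Fin n)) (ε : ℝ) : Continuous (KK f t x ε) := by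
  have h1 : Continuous fun ξ : EuclideanSpace ℝ (Fin n) =>
      Complex.exp (-((ε:ℂ) + Complex.I * t) * ((‖ξ‖^2 : ℝ) : ℂ) / 2) := by fun_prop
  have h2 : Continuous fun ξ : EuclideanSpace ℝ (Fin n) =>
      Complex.exp (Complex.I * ((inner ℝ x ξ : ℝ) : ℂ)) :=
    Complex.continuous_exp.comp (continuous_const.mul (Complex.continuous_ofReal.comp
      (Continuous.inner continuous_const continuous_id)))
  exact ((h1.mul (gg_cont f)).mul h2)

lemma tendsto_KK (f : SchwartzMap (EuclideanSpace ℝ (Fin n)) ℂ) (t : ℝ)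
    (x : EuclideanSpace ℝ (Fin n)) :
    Tendsto (fun ε : ℝ => ∫ ξ, KK f t x ε ξ) (𝓝[>] (0:ℝ))
      (𝓝 (∫ ξ, KK f t x 0 ξ)) := by
  apply tendsto_integral_filter_of_dominated_convergence (fun ξ => ‖gg f ξ‖)
  · exact Eventually.of_forall fun ε => (KK_cont f t x ε).aestronglyMeasurable
  · filter_upwards [self_mem_nhdsWithin] with ε (hε : 0 < ε)
    exact Eventually.of_forall fun ξ => norm_KK f t x ε hε.le ξ
  · exact (gg_int f).norm
  · refine Eventually.of_forall fun ξ => ?_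
    have hc : Continuous fun ε : ℝ => KK f t x ε ξ := by
      unfold KK
      have h1 : Continuous fun ε : ℝ =>
          Complex.exp (-((ε:ℂ) + Complex.I * t) * ((‖ξ‖^2 : ℝ) : ℂ) / 2) := by fun_prop
      exact (h1.mul continuous_const).mul continuous_const
    exact (hc.tendsto 0).mono_left nhdsWithin_le_nhds

noncomputable def CC (n : ℕ) (t : ℝ) (ε : ℝ) : ℂ :=
  ((π : ℂ) / (((ε:ℂ) + Complex.I * t) / 2)) ^ ((n : ℂ) / 2)

noncomputable def JJ (f : SchwartzMap (EuclideanSpace ℝ (Fin n)) ℂ) (t : ℝ)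
    (x : EuclideanSpace ℝ (Fin n)) (ε : ℝ) : ℂ :=
  ∫ y, Complex.exp (-((‖x - y‖^2 : ℝ) : ℂ) / (2 * ((ε:ℂ) + Complex.I * t))) * f y

lemma J_exp_re_nonpos (ε t r : ℝ) (hε : 0 ≤ ε) (hr : 0 ≤ r) :
    (-(r:ℂ) / (2*((ε:ℂ) + Complex.I*t))).re ≤ 0 := by
  rw [div_eq_mul_inv, neg_mul, Complex.neg_re, Complex.re_ofReal_mul, Complex.inv_re]
  have h1 : (2*((ε:ℂ) + Complex.I*t)).re = 2*ε := by
    have : 2*((ε:ℂ) + Complex.I*t) = ((2*ε : ℝ):ℂ) + ((2*t:ℝ):ℂ)*Complex.I := by push_cast; ring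
    rw [this]; simp
  rw [h1]
  have h2 := Complex.normSq_nonneg (2*((ε:ℂ) + Complex.I*t))
  have h3 : 0 ≤ r * (2*ε / Complex.normSq (2*((ε:ℂ) + Complex.I*t))) := by positivity
  linarith

lemma tendsto_JJ (f : SchwartzMap (EuclideanSpace ℝ (Fin n)) ℂ) {t : ℝ} (ht : 0 < t)
    (x : EuclideanSpace ℝ (Fin n)) :
    Tendsto (JJ f t x) (𝓝[>] (0:ℝ)) (𝓝 (JJ f t x 0)) := by
  apply tendsto_integral_filter_of_dominated_convergence (fun y => ‖f y‖)
  · refine Eventually.of_forall fun ε => Continuous.aestronglyMeasurable ?_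
    fun_prop
  · filter_upwards [self_mem_nhdsWithin] with ε (hε : 0 < ε)
    refine Eventually.of_forall fun y => ?_
    rw [norm_mul, Complex.norm_exp]
    have h1 : Real.exp ((-((‖x - y‖^2 : ℝ) : ℂ) / (2 * ((ε:ℂ) + Complex.I * t))).re) ≤ 1 := by
      rw [Real.exp_le_one_iff]
      exact J_exp_re_nonpos ε t _ hε.le (by positivity)
    calc _ ≤ 1 * ‖f y‖ := mul_le_mul_of_nonneg_right h1 (norm_nonneg _)
      _ = ‖f y‖ := one_mul _
  · exact f.integrable.norm
  · refine Eventually.of_forall fun y => ?_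
    have hne : (2 * (((0:ℝ):ℂ) + Complex.I * t)) ≠ 0 := by
      simp [Complex.ext_iff, ht.ne']
    have hc : ContinuousAt (fun ε : ℝ =>
        Complex.exp (-((‖x - y‖^2 : ℝ) : ℂ) / (2 * ((ε:ℂ) + Complex.I * t))) * f y) 0 := by
      apply ContinuousAt.mul _ continuousAt_const
      apply Complex.continuous_exp.continuousAt.comp
      apply ContinuousAt.div continuousAt_const
      · fun_prop
      · exact hne
    exact hc.tendsto.mono_left nhdsWithin_le_nhds

lemma tendsto_CC (n : ℕ) {t : ℝ} (ht : 0 < t) :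
    Tendsto (CC n t) (𝓝[>] (0:ℝ)) (𝓝 (CC n t 0)) := by
  have hne : ((((0:ℝ):ℂ) + Complex.I * t) / 2) ≠ 0 := by
    simp [Complex.ext_iff, ht.ne']
  have hbase : ContinuousAt (fun ε : ℝ => (π : ℂ) / (((ε:ℂ) + Complex.I * t) / 2)) 0 := by
    apply ContinuousAt.div continuousAt_const
    · fun_prop
    · exact hne
  have ht' : (t:ℂ) ≠ 0 := by exact_mod_cast ht.ne'
  have hz0 : (π : ℂ) / ((((0:ℝ):ℂ) + Complex.I * t) / 2) = -((2*π/t : ℝ) : ℂ) * Complex.I := by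
    rw [div_eq_iff hne]
    push_cast
    have hI : Complex.I * Complex.I = -1 := Complex.I_mul_I
    field_simp
    ring_nf
    rw [Complex.I_sq]
    ring
  have hmem : (π : ℂ) / ((((0:ℝ):ℂ) + Complex.I * t) / 2) ∈ Complex.slitPlane := by
    rw [hz0, Complex.mem_slitPlane_iff]
    right
    have h5 : (-((2*π/t : ℝ):ℂ) * Complex.I).im = -(2*π/t) := by simp
    rw [h5]
    have h6 : 0 < 2*π/t := by positivity
    exact neg_ne_zero.mpr h6.ne'
  have h7 : Tendsto (CC n t) (𝓝 (0:ℝ)) (𝓝 (CC n t 0)) := by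
    unfold CC
    exact (continuousAt_cpow_const (b := ((n:ℂ)/2)) hmem).tendsto.comp hbase.tendsto
  exact h7.mono_left nhdsWithin_le_nhds

lemma b_re (ε t : ℝ) : ((((ε:ℂ) + Complex.I * t)) / 2).re = ε / 2 := by
  have : (((ε:ℂ) + Complex.I * t)) / 2 = ((ε/2 : ℝ):ℂ) + ((t/2 : ℝ):ℂ) * Complex.I := by
    push_cast; ring
  rw [this]; simp

lemma integrable_uncurry (f : SchwartzMap (EuclideanSpace ℝ (Fin n)) ℂ) (t : ℝ)
    (x : EuclideanSpace ℝ (Fin n)) {ε : ℝ} (hε : 0 < ε) :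
    Integrable (Function.uncurry fun (ξ y : EuclideanSpace ℝ (Fin n)) =>
      Complex.exp (-((ε:ℂ) + Complex.I * t) * ((‖ξ‖^2 : ℝ) : ℂ) / 2) *
        (f y * Complex.exp (-Complex.I * ((inner ℝ y ξ : ℝ) : ℂ))) *
        Complex.exp (Complex.I * ((inner ℝ x ξ : ℝ) : ℂ)))
      (volume.prod volume) := by
  have hre : (0:ℝ) < ((ε/2 : ℝ) : ℂ).re := by simpa using by positivity
  have hint1 : Integrable (fun ξ : EuclideanSpace ℝ (Fin n) =>
      Real.exp (-(ε/2) * ‖ξ‖^2)) := by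
    have := (GaussianFourier.integrable_cexp_neg_mul_sq_norm_add (b := ((ε/2 : ℝ) : ℂ))
      hre 0 (0 : EuclideanSpace ℝ (Fin n))).norm
    refine this.congr (Eventually.of_forall fun ξ => ?_)
    simp only [Complex.norm_exp]
    congr 1
    have : -((ε/2 : ℝ) : ℂ) * ((‖ξ‖:ℂ))^2 + 0 * ((inner ℝ (0 : EuclideanSpace ℝ (Fin n)) ξ : ℝ) : ℂ)
        = ((-(ε/2) * ‖ξ‖^2 : ℝ) : ℂ) := by push_cast; ring
    rw [this, Complex.ofReal_re]
  apply Integrable.mono' (hint1.mul_prod f.integrable.norm)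
  · apply Continuous.aestronglyMeasurable
    unfold Function.uncurry
    have h1 : Continuous fun p : EuclideanSpace ℝ (Fin n) × EuclideanSpace ℝ (Fin n) =>
        Complex.exp (-((ε:ℂ) + Complex.I * t) * ((‖p.1‖^2 : ℝ) : ℂ) / 2) := by fun_prop
    have h2 : Continuous fun p : EuclideanSpace ℝ (Fin n) × EuclideanSpace ℝ (Fin n) =>
        Complex.exp (-Complex.I * ((inner ℝ p.2 p.1 : ℝ) : ℂ)) :=
      Complex.continuous_exp.comp (continuous_const.mul (Complex.continuous_ofReal.comp
        (Continuous.inner continuous_snd continuous_fst)))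
    have h3 : Continuous fun p : EuclideanSpace ℝ (Fin n) × EuclideanSpace ℝ (Fin n) =>
        Complex.exp (Complex.I * ((inner ℝ x p.1 : ℝ) : ℂ)) :=
      Complex.continuous_exp.comp (continuous_const.mul (Complex.continuous_ofReal.comp
        (Continuous.inner continuous_const continuous_fst)))
    exact (h1.mul ((f.continuous.comp continuous_snd).mul h2)).mul h3
  · refine Eventually.of_forall fun p => ?_
    simp only [Function.uncurry]
    rw [norm_mul, norm_mul, norm_mul,
      Complex.norm_exp, Complex.norm_exp, Complex.norm_exp, re_aux]
    have h2 : (Complex.I * ((inner ℝ x p.1 : ℝ) : ℂ)).re = 0 := by simp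
    have h3 : (-Complex.I * ((inner ℝ p.2 p.1 : ℝ) : ℂ)).re = 0 := by simp
    rw [h2, h3, Real.exp_zero, mul_one, mul_one]
    have : -ε * ‖p.1‖^2 / 2 = -(ε/2) * ‖p.1‖^2 := by ring
    rw [this]

lemma key (f : SchwartzMap (EuclideanSpace ℝ (Fin n)) ℂ) (t : ℝ)
    (x : EuclideanSpace ℝ (Fin n)) {ε : ℝ} (hε : 0 < ε) :
    ∫ ξ, KK f t x ε ξ = CC n t ε * JJ f t x ε := by
  set b : ℂ := ((ε:ℂ) + Complex.I * t) / 2 with hb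
  have hbre : 0 < b.re := by rw [hb, b_re]; positivity
  calc ∫ ξ, KK f t x ε ξ
      = ∫ ξ, ∫ y, Complex.exp (-((ε:ℂ) + Complex.I * t) * ((‖ξ‖^2 : ℝ) : ℂ) / 2) *
          (f y * Complex.exp (-Complex.I * ((inner ℝ y ξ : ℝ) : ℂ))) *
          Complex.exp (Complex.I * ((inner ℝ x ξ : ℝ) : ℂ)) := by
        congr 1 with ξ
        rw [KK, gg, mul_assoc, ← integral_mul_const, ← integral_const_mul]
        congr 1 with y
        ring
    _ = ∫ y, ∫ ξ, Complex.exp (-((ε:ℂ) + Complex.I * t) * ((‖ξ‖^2 : ℝ) : ℂ) / 2) *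
          (f y * Complex.exp (-Complex.I * ((inner ℝ y ξ : ℝ) : ℂ))) *
          Complex.exp (Complex.I * ((inner ℝ x ξ : ℝ) : ℂ)) :=
        integral_integral_swap (integrable_uncurry f t x hε)
    _ = ∫ y, f y * (((π : ℂ) / b) ^ ((n:ℂ)/2) *
          Complex.exp (-((‖x - y‖^2 : ℝ) : ℂ) / (2 * ((ε:ℂ) + Complex.I * t)))) := by
        congr 1 with y
        have hei : ∀ ξ : EuclideanSpace ℝ (Fin n),
            Complex.exp (-((ε:ℂ) + Complex.I * t) * ((‖ξ‖^2 : ℝ) : ℂ) / 2) *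
              (f y * Complex.exp (-Complex.I * ((inner ℝ y ξ : ℝ) : ℂ))) *
              Complex.exp (Complex.I * ((inner ℝ x ξ : ℝ) : ℂ))
            = f y * Complex.exp (-b * ((‖ξ‖:ℂ))^2 + Complex.I * ((inner ℝ (x - y) ξ : ℝ) : ℂ)) := by
          intro ξ
          rw [show Complex.exp (-((ε:ℂ) + Complex.I * t) * ((‖ξ‖^2 : ℝ) : ℂ) / 2) *
              (f y * Complex.exp (-Complex.I * ((inner ℝ y ξ : ℝ) : ℂ))) *
              Complex.exp (Complex.I * ((inner ℝ x ξ : ℝ) : ℂ))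
            = f y * (Complex.exp (-((ε:ℂ) + Complex.I * t) * ((‖ξ‖^2 : ℝ) : ℂ) / 2) *
              Complex.exp (-Complex.I * ((inner ℝ y ξ : ℝ) : ℂ)) *
              Complex.exp (Complex.I * ((inner ℝ x ξ : ℝ) : ℂ))) from by ring,
            ← Complex.exp_add, ← Complex.exp_add]
          congr 1
          rw [inner_sub_left, hb]
          push_cast
          ring
        have hz : ((ε:ℂ) + Complex.I * t) ≠ 0 := by
          intro h
          have h8 := congrArg Complex.re h
          simp at h8
          linarith
        have h4b : Complex.I^2 * ((‖x-y‖:ℂ))^2 / (4*b)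
            = -((‖x - y‖^2 : ℝ) : ℂ) / (2 * ((ε:ℂ) + Complex.I * t)) := by
          rw [Complex.I_sq, hb]
          push_cast
          field_simp
          ring
        rw [integral_congr_ae (Eventually.of_forall hei), integral_const_mul,
          GaussianFourier.integral_cexp_neg_mul_sq_norm_add hbre Complex.I (x - y),
          finrank_euclideanSpace_fin, h4b]
    _ = CC n t ε * JJ f t x ε := by
        rw [CC, JJ, ← hb, ← integral_const_mul]
        congr 1 with y
        ring


lemma base_eq {t : ℝ} (ht : 0 < t) :
    (π : ℂ) / ((((0:ℝ):ℂ) + Complex.I * t) / 2) = -((2*π/t : ℝ) : ℂ) * Complex.I := by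
  have ht' : (t:ℂ) ≠ 0 := by exact_mod_cast ht.ne'
  have hne : ((((0:ℝ):ℂ) + Complex.I * t) / 2) ≠ 0 := by
    simp [Complex.ext_iff, ht.ne']
  rw [div_eq_iff hne]
  push_cast
  field_simp
  ring_nf
  rw [Complex.I_sq]
  ring

lemma cpow_neg_mul_I (r : ℝ) (hr : 0 < r) (n : ℕ) :
    (-(r:ℂ)*Complex.I) ^ ((n:ℂ)/2)
      = ((r ^ ((n:ℝ)/2) : ℝ) : ℂ) * Complex.exp (-((π:ℂ) * Complex.I * n / 4)) := by
  have hz : (-(r:ℂ)*Complex.I) ≠ 0 := by simp [Complex.ext_iff, hr.ne']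
  rw [Complex.cpow_def_of_ne_zero hz]
  have hlog : Complex.log (-(r:ℂ)*Complex.I) = (Real.log r : ℂ) - ((π/2 : ℝ):ℂ)*Complex.I := by
    rw [Complex.log]
    have h1 : ‖(-(r:ℂ)*Complex.I)‖ = r := by simp [abs_of_pos hr]
    have h2 : (-(r:ℂ)*Complex.I).arg = -(π/2) := by
      rw [Complex.arg_eq_neg_pi_div_two_iff]
      constructor <;> simp [hr]
    rw [h1, h2]; push_cast; ring
  rw [hlog]
  have h3 : ((Real.log r : ℂ) - ((π/2 : ℝ):ℂ)*Complex.I) * ((n:ℂ)/2)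
      = ((Real.log r * (n/2) : ℝ) : ℂ) + (-((π:ℂ) * Complex.I * n / 4)) := by push_cast; ring
  rw [h3, Complex.exp_add, ← Complex.ofReal_exp, ← Real.rpow_def_of_pos hr]

lemma const_real (n : ℕ) {t : ℝ} (ht : 0 < t) :
    ((2*π)^(-(n:ℤ)) * (2*π/t)^((n:ℝ)/2) : ℝ) = ((2*π*t)^((n:ℝ)/2))⁻¹ := by
  have h2π : (0:ℝ) < 2*π := by positivity
  have e1 : ((2*π)^(-(n:ℤ)) : ℝ) = (2*π) ^ ((-n : ℝ)) := by
    rw [← Real.rpow_intCast]; push_cast; ring_nf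
  rw [e1, Real.div_rpow h2π.le ht.le, Real.mul_rpow h2π.le ht.le,
    div_eq_mul_inv, ← mul_assoc, ← Real.rpow_add h2π, mul_inv]
  congr 1
  rw [← Real.rpow_neg h2π.le]
  congr 1
  ring


lemma const_eq (n : ℕ) {t : ℝ} (ht : 0 < t) :
    (((2*π)^(-(n:ℤ)) : ℝ) : ℂ) * ((((2*π/t) ^ ((n:ℝ)/2) : ℝ) : ℂ) *
        Complex.exp (-((π:ℂ) * Complex.I * n / 4)))
      = ((((2*π*t) ^ ((n:ℝ)/2) : ℝ) : ℂ) * Complex.exp ((π:ℂ) * Complex.I * n / 4))⁻¹ := by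
  rw [mul_inv, ← Complex.exp_neg, ← mul_assoc]
  congr 1
  rw [← Complex.ofReal_mul, ← Complex.ofReal_inv, const_real n ht]

lemma CC_zero (n : ℕ) {t : ℝ} (ht : 0 < t) :
    CC n t 0 = (((2*π/t) ^ ((n:ℝ)/2) : ℝ) : ℂ) * Complex.exp (-((π:ℂ) * Complex.I * n / 4)) := by
  have h2πt : (0:ℝ) < 2*π/t := by positivity
  unfold CC
  rw [base_eq ht, cpow_neg_mul_I _ h2πt n]

lemma JJ_zero (f : SchwartzMap (EuclideanSpace ℝ (Fin n)) ℂ) {t : ℝ} (ht : 0 < t)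
    (x : EuclideanSpace ℝ (Fin n)) :
    JJ f t x 0 = ∫ y : EuclideanSpace ℝ (Fin n), Complex.exp (Complex.I * ((‖x - y‖ ^ 2 : ℝ) : ℂ) / (2 * (t : ℂ))) * f y := by
  have hexp : ∀ y : EuclideanSpace ℝ (Fin n),
      -((‖x - y‖^2 : ℝ) : ℂ) / (2 * (((0:ℝ):ℂ) + Complex.I * t))
        = Complex.I * ((‖x - y‖ ^ 2 : ℝ) : ℂ) / (2 * (t:ℂ)) := by
    intro y
    have ht' : (t:ℂ) ≠ 0 := by exact_mod_cast ht.ne'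
    field_simp
    ring_nf
    rw [Complex.I_sq]
    ring
    simp
  unfold JJ
  exact integral_congr_ae (Eventually.of_forall fun y => by simp only []; rw [hexp y])

end Stmt9Aux

/-- For `f ∈ 𝒮(ℝⁿ)` and `t > 0`,
`ℱ*(e^{−(1/2)it|ξ|²} ℱf)(x) = (2πit)^{−n/2} ∫ e^{i|x−y|²/(2t)} f(y) dy`,
where `ℱf(ξ) = ∫ f(x) e^{−ix·ξ} dx`, `ℱ*g(x) = (2π)^{−n} ∫ g(ξ) e^{ix·ξ} dξ`, and
`(2πit)^{n/2} = (2πt)^{n/2} e^{iπn/4}`. -/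
theorem stmt_9 (n : ℕ) (f : SchwartzMap (EuclideanSpace ℝ (Fin n)) ℂ) (t : ℝ) (ht : 0 < t)
    (x : EuclideanSpace ℝ (Fin n)) :
    (((2 * π) ^ (-(n : ℤ)) : ℝ) : ℂ) *
      ∫ ξ : EuclideanSpace ℝ (Fin n),
        Complex.exp (-Complex.I * (t : ℂ) * ((‖ξ‖ ^ 2 : ℝ) : ℂ) / 2) *
          (∫ y : EuclideanSpace ℝ (Fin n),
            f y * Complex.exp (-Complex.I * ((inner ℝ y ξ : ℝ) : ℂ))) *
          Complex.exp (Complex.I * ((inner ℝ x ξ : ℝ) : ℂ)) =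
    ((((2 * π * t) ^ ((n : ℝ) / 2) : ℝ) : ℂ) * Complex.exp ((π : ℂ) * Complex.I * (n : ℂ) / 4))⁻¹ *
      ∫ y : EuclideanSpace ℝ (Fin n),
        Complex.exp (Complex.I * ((‖x - y‖ ^ 2 : ℝ) : ℂ) / (2 * (t : ℂ))) * f y := by
  open Stmt9Aux Filter in
  have h1 : (∫ ξ : EuclideanSpace ℝ (Fin n),
      Complex.exp (-Complex.I * (t : ℂ) * ((‖ξ‖ ^ 2 : ℝ) : ℂ) / 2) *
        (∫ y : EuclideanSpace ℝ (Fin n),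
          f y * Complex.exp (-Complex.I * ((inner ℝ y ξ : ℝ) : ℂ))) *
        Complex.exp (Complex.I * ((inner ℝ x ξ : ℝ) : ℂ)))
      = ∫ ξ, KK f t x 0 ξ := by
    refine integral_congr_ae (Eventually.of_forall fun ξ => ?_)
    rw [KK, gg]
    simp only []
    rw [show -Complex.I * (t : ℂ) * ((‖ξ‖ ^ 2 : ℝ) : ℂ) / 2
        = -((((0:ℝ)):ℂ) + Complex.I * t) * ((‖ξ‖ ^ 2 : ℝ) : ℂ) / 2 from by push_cast; ring]
  have e1 : ∀ᶠ ε in nhdsWithin (0:ℝ) (Set.Ioi 0),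
      CC n t ε * JJ f t x ε = ∫ ξ, KK f t x ε ξ := by
    filter_upwards [self_mem_nhdsWithin] with ε (hε : (0:ℝ) < ε)
    exact (key f t x hε).symm
  have main : CC n t 0 * JJ f t x 0 = ∫ ξ, KK f t x 0 ξ :=
    tendsto_nhds_unique (((tendsto_CC n ht).mul (tendsto_JJ f ht x)).congr' e1)
      (tendsto_KK f t x)
  rw [h1, ← main, CC_zero n ht, JJ_zero f ht x]
  rw [show (((2 * π) ^ (-(n : ℤ)) : ℝ) : ℂ) *
      ((((2*π/t) ^ ((n:ℝ)/2) : ℝ) : ℂ) * Complex.exp (-((π:ℂ) * Complex.I * n / 4)) *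
        ∫ y, Complex.exp (Complex.I * ((‖x - y‖ ^ 2 : ℝ) : ℂ) / (2 * (t : ℂ))) * f y)
    = ((((2 * π) ^ (-(n : ℤ)) : ℝ) : ℂ) *
        ((((2*π/t) ^ ((n:ℝ)/2) : ℝ) : ℂ) * Complex.exp (-((π:ℂ) * Complex.I * n / 4)))) *
        ∫ y, Complex.exp (Complex.I * ((‖x - y‖ ^ 2 : ℝ) : ℂ) / (2 * (t : ℂ))) * f y from by ring]
  rw [const_eq n ht]
end
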